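/- arXiv:2005.05253 — 6 statements merged into one kernel-verified Lean document; each statement's English description precedes it below -/
import Mathlib

section
/- Let w:[0,1]²→ℝ be a bounded symmetric measurable function, let α>0, and let S_u, S_l, T_l, T_u be measurable subsets of [0,1], each of measure at least α, such that S_u ≤ S_l ≤ T_l ≤ T_u (meaning every element of an earlier set is ≤ every element of a later set). Then Γ(w) ≥ α³ · ( w̄(S_u,T_u) − w̄(S_l,T_l) ), where w̄(S,T) = (1/(|S||T|)) ∫_{S×T} w. -/
/-!
For `A ⊆ [0,1]` write `g_A t = ∫_A w(x,t) dx`. If `A` lies to the left of `B ≤ D`, then for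
`y ∈ B`, `z ∈ D`, `y < z` the first term of the integrand of `Γ(w,A)` is at least
`g_A z - g_A y`; integrating over `B × D` gives
`Γ(w,A) ≥ |B| ∫_D g_A - |D| ∫_B g_A = |A||B||D| (w̄(A,D) - w̄(A,B))`.
Symmetrically, the second term handles `B ≤ D` lying to the left of `A`.

Write `w̄(S_u,T_u) - w̄(S_l,T_l) = c + d` with `c = w̄(S_u,T_u) - w̄(S_l,T_u)` and
`d = w̄(S_l,T_u) - w̄(S_l,T_l)`. Taking `A = T_u` (with `B, D = S_u, S_l`, using the symmetry of
`w`) bounds `α³ c`, and `A = S_l` (with `B, D = T_l, T_u`) bounds `α³ d`; this settles the cases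
where `c` or `d` is negative. When both are nonnegative, the same estimates for the unions
`A = S_u ∪ S_l` and `A = T_l ∪ T_u` combine to a bound on `α³ (c + d)`.
-/

open MeasureTheory Set

/-- `Γ(w, A)`. -/
noncomputable def gammaA (w : ℝ → ℝ → ℝ) (A : Set ℝ) : ℝ :=
  ∫ y in Icc (0:ℝ) 1, ∫ z in Icc (0:ℝ) 1,
    if y < z then
      max (∫ x in A ∩ Icc 0 y, (w x z - w x y)) 0
        + max (∫ x in A ∩ Icc z 1, (w x y - w x z)) 0
    else 0

/-- `Γ(w) = sup { Γ(w,A) : A ⊆ [0,1] measurable }`. -/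
noncomputable def Gamma (w : ℝ → ℝ → ℝ) : ℝ :=
  sSup {r : ℝ | ∃ A : Set ℝ, MeasurableSet A ∧ A ⊆ Icc 0 1 ∧ r = gammaA w A}

/-- The average value `w̄(S,T)` of `w` over `S × T`. -/
noncomputable def avgOn (w : ℝ → ℝ → ℝ) (S T : Set ℝ) : ℝ :=
  (∫ x in S, ∫ y in T, w x y) / ((volume S).toReal * (volume T).toReal)

theorem abs_setIntegral_le_of_subset_Icc {f : ℝ → ℝ} {X : Set ℝ} {M : ℝ} (hX : X ⊆ Icc 0 1)
    (hM : 0 ≤ M) (hf : ∀ x ∈ X, |f x| ≤ M) : |∫ x in X, f x| ≤ M := by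
  have hX1 : volume.real X ≤ 1 := by
    calc volume.real X ≤ volume.real (Icc (0:ℝ) 1) :=
          measureReal_mono hX measure_Icc_lt_top.ne
      _ = 1 := by simp
  calc |∫ x in X, f x| ≤ M * volume.real X :=
        norm_setIntegral_le_of_norm_le_const (f := f)
          (measure_lt_top_mono hX measure_Icc_lt_top) hf
    _ ≤ M := mul_le_of_le_one_right hM hX1

theorem stronglyMeasurable_setIntegral_of_measurableSet {α β E : Type*} [MeasurableSpace α]
    [MeasurableSpace β] [NormedAddCommGroup E] [NormedSpace ℝ E] {ν : Measure β} [SFinite ν]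
    {f : α × β → E} (hf : StronglyMeasurable f) {t : α → Set β}
    (ht : MeasurableSet {q : α × β | q.2 ∈ t q.1}) :
    StronglyMeasurable fun a => ∫ b in t a, f (a, b) ∂ν := by
  have h : ∀ a, ∫ b in t a, f (a, b) ∂ν
      = ∫ b, {q : α × β | q.2 ∈ t q.1}.indicator f (a, b) ∂ν :=
    fun a => (integral_indicator (measurable_prodMk_left ht)).symm
  simp_rw [h]
  exact (hf.indicator ht).integral_prod_right'

theorem integrable_restrict_prod_of_abs_le {f : ℝ × ℝ → ℝ} (hf : Measurable f) {X Y : Set ℝ}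
    (hX : MeasurableSet X) (hY : MeasurableSet Y) (hX1 : X ⊆ Icc 0 1) (hY1 : Y ⊆ Icc 0 1)
    {M : ℝ} (hM : ∀ p ∈ X ×ˢ Y, |f p| ≤ M) :
    Integrable f ((volume.restrict X).prod (volume.restrict Y)) := by
  rw [Measure.prod_restrict, ← IntegrableOn]
  refine Measure.integrableOn_of_bounded ?_ hf.aestronglyMeasurable
    ((ae_restrict_iff' (hX.prod hY)).2 (ae_of_all _ hM))
  rw [Measure.prod_prod]
  exact ENNReal.mul_ne_top (measure_lt_top_mono hX1 measure_Icc_lt_top).ne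
    (measure_lt_top_mono hY1 measure_Icc_lt_top).ne

theorem setIntegral_sub_const {α : Type*} [MeasurableSpace α] {μ : Measure α} {s : Set α}
    {g : α → ℝ} (hs : μ s ≠ ⊤) (hg : IntegrableOn g s μ) (c : ℝ) :
    ∫ z in s, (g z - c) ∂μ = (∫ z in s, g z ∂μ) - μ.real s * c := by
  rw [integral_sub hg (integrableOn_const (C := c) hs), setIntegral_const, smul_eq_mul]

theorem integrableOn_setIntegral_sub {α : Type*} [MeasurableSpace α] {μ : Measure α}
    {s t : Set α} {g : α → ℝ} (hs : μ s ≠ ⊤) (ht : μ t ≠ ⊤) (hgs : IntegrableOn g s μ)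
    (hgt : IntegrableOn g t μ) : IntegrableOn (fun y => ∫ z in t, (g z - g y) ∂μ) s μ := by
  simp_rw [setIntegral_sub_const ht hgt]
  exact (integrableOn_const (C := ∫ z in t, g z ∂μ) hs).sub (hgs.const_mul _)

theorem setIntegral_setIntegral_sub {α : Type*} [MeasurableSpace α] {μ : Measure α}
    {s t : Set α} {g : α → ℝ} (hs : μ s ≠ ⊤) (ht : μ t ≠ ⊤) (hgs : IntegrableOn g s μ)
    (hgt : IntegrableOn g t μ) :
    ∫ y in s, ∫ z in t, (g z - g y) ∂μ ∂μ
      = μ.real s * (∫ z in t, g z ∂μ) - μ.real t * ∫ y in s, g y ∂μ := by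
  simp_rw [setIntegral_sub_const ht hgt]
  rw [integral_sub (integrableOn_const (C := ∫ z in t, g z ∂μ) hs) (hgs.const_mul _),
    setIntegral_const, smul_eq_mul, integral_const_mul]

theorem aedisjoint_of_forall_le {α : Type*} [MeasurableSpace α] [PartialOrder α]
    {μ : Measure α} [NullSingletonClass μ] {s t : Set α} (h : ∀ x ∈ s, ∀ y ∈ t, x ≤ y) :
    AEDisjoint μ s t :=
  Set.Subsingleton.measure_zero
    (fun a ha b hb => le_antisymm (h a ha.1 b hb.2) (h b hb.1 a ha.2)) μ

theorem forall_le_trans_of_nonempty {α : Type*} [Preorder α] {s t u : Set α}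
    (hst : ∀ x ∈ s, ∀ y ∈ t, x ≤ y) (htu : ∀ y ∈ t, ∀ z ∈ u, y ≤ z) (ht : t.Nonempty) :
    ∀ x ∈ s, ∀ z ∈ u, x ≤ z := fun x hx z hz =>
  (hst x hx ht.some ht.some_mem).trans (htu ht.some ht.some_mem z hz)

theorem pow_three_le_mul_mul {α a b c : ℝ} (hα : 0 ≤ α) (ha : α ≤ a) (hb : α ≤ b)
    (hc : α ≤ c) : α ^ 3 ≤ a * b * c :=
  calc α ^ 3 = α * α * α := by ring
    _ ≤ a * b * c := mul_le_mul (mul_le_mul ha hb hα (hα.trans ha)) hc hα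
        (mul_nonneg (hα.trans ha) (hα.trans hb))

theorem pow_three_mul_add_le {α su sl tl tu G c d : ℝ} (hα : 0 < α) (hsu : α ≤ su)
    (hsl : α ≤ sl) (htl : α ≤ tl) (htu : α ≤ tu) (hG : 0 ≤ G) (hc : su * sl * tu * c ≤ G)
    (hd : sl * tl * tu * d ≤ G)
    (hcd : su * sl * tu * (tl + tu) * c + sl * tl * tu * (su + sl) * d ≤ (sl + tu) * G) :
    α ^ 3 * (c + d) ≤ G := by
  have hsl0 := hα.trans_le hsl
  have htu0 := hα.trans_le htu
  have hα3 := pow_pos hα 3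
  have k_slu := pow_three_le_mul_mul hα.le hsu hsl htu
  have k_ltu := pow_three_le_mul_mul hα.le hsl htl htu
  rcases le_or_gt 0 c with hc0 | hc0 <;> rcases le_or_gt 0 d with hd0 | hd0
  · have k_utl := pow_three_le_mul_mul hα.le hsu htu htl
    have k_ult := pow_three_le_mul_mul hα.le hsu hsl htl
    have hc' := mul_le_mul_of_nonneg_right k_utl hc0
    have hc'' := mul_le_mul_of_nonneg_right k_slu hc0
    have hd' := mul_le_mul_of_nonneg_right k_ult hd0
    have hd'' := mul_le_mul_of_nonneg_right k_ltu hd0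
    refine le_of_mul_le_mul_left ?_ (add_pos hsl0 htu0)
    nlinarith
  · nlinarith [mul_le_mul_of_nonneg_right k_slu hc0]
  · nlinarith [mul_le_mul_of_nonneg_right k_ltu hd0]
  · nlinarith

theorem pow_three_mul_sub_div_le {α su sl tl tu G Puu Plu Pll Pul : ℝ} (hα : 0 < α)
    (hsu : α ≤ su) (hsl : α ≤ sl) (htl : α ≤ tl) (htu : α ≤ tu) (hG : 0 ≤ G)
    (h_l : tl * Plu - tu * Pll ≤ G) (h_u : sl * Puu - su * Plu ≤ G)
    (h_lu : tl * (Puu + Plu) - tu * (Pul + Pll) ≤ G)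
    (h_ul : sl * (Pul + Puu) - su * (Pll + Plu) ≤ G) :
    α ^ 3 * (Puu / (su * tu) - Pll / (sl * tl)) ≤ G := by
  have hsu0 := (hα.trans_le hsu).ne'
  have hsl0 := (hα.trans_le hsl).ne'
  have htl0 := (hα.trans_le htl).ne'
  have htu0 := (hα.trans_le htu).ne'
  have key := pow_three_mul_add_le hα hsu hsl htl htu hG
    (c := Puu / (su * tu) - Plu / (sl * tu)) (d := Plu / (sl * tu) - Pll / (sl * tl))
    (by field_simp; linarith) (by field_simp; linarith) (by field_simp; nlinarith)
  rwa [sub_add_sub_cancel] at key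

noncomputable def gammaKernel (w : ℝ → ℝ → ℝ) (A : Set ℝ) (p : ℝ × ℝ) : ℝ :=
  if p.1 < p.2 then
    max (∫ x in A ∩ Icc 0 p.1, (w x p.2 - w x p.1)) 0
      + max (∫ x in A ∩ Icc p.2 1, (w x p.1 - w x p.2)) 0
  else 0

theorem gammaA_eq_integral_gammaKernel (w : ℝ → ℝ → ℝ) (A : Set ℝ) :
    gammaA w A = ∫ y in Icc (0:ℝ) 1, ∫ z in Icc (0:ℝ) 1, gammaKernel w A (y, z) :=
  rfl

theorem gammaKernel_nonneg (w : ℝ → ℝ → ℝ) (A : Set ℝ) (p : ℝ × ℝ) :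
    0 ≤ gammaKernel w A p := by
  unfold gammaKernel
  split_ifs <;> positivity

theorem measurable_gammaKernel {w : ℝ → ℝ → ℝ} (hw : Measurable (Function.uncurry w))
    {A : Set ℝ} (hA : MeasurableSet A) : Measurable (gammaKernel w A) := by
  have hw' : ∀ {i j : ℝ × ℝ → ℝ}, Measurable i → Measurable j →
      Measurable fun q : (ℝ × ℝ) × ℝ => w q.2 (i q.1) - w q.2 (j q.1) := fun hi hj =>
    (hw.comp (measurable_snd.prodMk (hi.comp measurable_fst))).sub
      (hw.comp (measurable_snd.prodMk (hj.comp measurable_fst)))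
  have h_left : Measurable fun p : ℝ × ℝ => ∫ x in A ∩ Icc 0 p.1, (w x p.2 - w x p.1) :=
    (stronglyMeasurable_setIntegral_of_measurableSet (ν := volume)
      (t := fun p => A ∩ Icc 0 p.1) (hw' measurable_snd measurable_fst).stronglyMeasurable
      ((hA.preimage measurable_snd).inter
        ((measurableSet_le measurable_const measurable_snd).inter
          (measurableSet_le measurable_snd measurable_fst.fst)))).measurable
  have h_right : Measurable fun p : ℝ × ℝ => ∫ x in A ∩ Icc p.2 1, (w x p.1 - w x p.2) :=
    (stronglyMeasurable_setIntegral_of_measurableSet (ν := volume)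
      (t := fun p => A ∩ Icc p.2 1) (hw' measurable_fst measurable_snd).stronglyMeasurable
      ((hA.preimage measurable_snd).inter
        ((measurableSet_le measurable_fst.snd measurable_snd).inter
          (measurableSet_le measurable_snd measurable_const)))).measurable
  exact Measurable.ite (measurableSet_lt measurable_fst measurable_snd)
    ((h_left.max measurable_const).add (h_right.max measurable_const)) measurable_const

noncomputable def rectIntegral (w : ℝ → ℝ → ℝ) (S T : Set ℝ) : ℝ :=
  ∫ x in S, ∫ y in T, w x y

structure IsBoundedKernel (w : ℝ → ℝ → ℝ) (C : ℝ) : Prop where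
  measurable : Measurable (Function.uncurry w)
  abs_le : ∀ x y : ℝ, x ∈ Icc (0:ℝ) 1 → y ∈ Icc (0:ℝ) 1 → |w x y| ≤ C

namespace IsBoundedKernel

variable {w : ℝ → ℝ → ℝ} {C : ℝ}

theorem nonneg (hw : IsBoundedKernel w C) : 0 ≤ C :=
  (abs_nonneg _).trans (hw.abs_le 0 0 (by simp) (by simp))

theorem abs_setIntegral_sub_le (hw : IsBoundedKernel w C) {X : Set ℝ} (hX : X ⊆ Icc 0 1)
    {s t : ℝ} (hs : s ∈ Icc (0:ℝ) 1) (ht : t ∈ Icc (0:ℝ) 1) :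
    |∫ x in X, (w x s - w x t)| ≤ 2 * C :=
  abs_setIntegral_le_of_subset_Icc hX (by linarith [hw.nonneg]) fun x hx =>
    calc |w x s - w x t| ≤ |w x s| + |w x t| := abs_sub _ _
      _ ≤ 2 * C := by linarith [hw.abs_le x s (hX hx) hs, hw.abs_le x t (hX hx) ht]

theorem gammaKernel_le (hw : IsBoundedKernel w C) {A : Set ℝ} (hA : A ⊆ Icc 0 1)
    {p : ℝ × ℝ} (hp : p ∈ Icc (0:ℝ) 1 ×ˢ Icc (0:ℝ) 1) : gammaKernel w A p ≤ 4 * C := by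
  have h2C : 0 ≤ 2 * C := by linarith [hw.nonneg]
  have h_left := (le_abs_self _).trans
    (hw.abs_setIntegral_sub_le (inter_subset_left.trans hA : A ∩ Icc 0 p.1 ⊆ _) hp.2 hp.1)
  have h_right := (le_abs_self _).trans
    (hw.abs_setIntegral_sub_le (inter_subset_left.trans hA : A ∩ Icc p.2 1 ⊆ _) hp.1 hp.2)
  unfold gammaKernel
  split_ifs
  · linarith [max_le h_left h2C, max_le h_right h2C]
  · linarith

theorem gammaA_le (hw : IsBoundedKernel w C) {A : Set ℝ} (hA : A ⊆ Icc 0 1) :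
    gammaA w A ≤ 4 * C := by
  have h4C : 0 ≤ 4 * C := by linarith [hw.nonneg]
  rw [gammaA_eq_integral_gammaKernel]
  refine (le_abs_self _).trans (abs_setIntegral_le_of_subset_Icc subset_rfl h4C fun y hy => ?_)
  refine abs_setIntegral_le_of_subset_Icc subset_rfl h4C fun z hz => ?_
  rw [abs_of_nonneg (gammaKernel_nonneg w A _)]
  exact hw.gammaKernel_le hA ⟨hy, hz⟩

theorem gammaA_le_Gamma (hw : IsBoundedKernel w C) {A : Set ℝ} (hA : MeasurableSet A)
    (hA1 : A ⊆ Icc 0 1) : gammaA w A ≤ Gamma w :=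
  le_csSup ⟨4 * C, by rintro r ⟨B, -, hB1, rfl⟩; exact hw.gammaA_le hB1⟩ ⟨A, hA, hA1, rfl⟩

theorem Gamma_nonneg (hw : IsBoundedKernel w C) : 0 ≤ Gamma w := by
  simpa [gammaA] using hw.gammaA_le_Gamma MeasurableSet.empty (empty_subset _)

theorem integrableOn_slice (hw : IsBoundedKernel w C) {X : Set ℝ} (hX : MeasurableSet X)
    (hX1 : X ⊆ Icc 0 1) {t : ℝ} (ht : t ∈ Icc (0:ℝ) 1) : IntegrableOn (fun x => w x t) X :=
  Measure.integrableOn_of_bounded (measure_lt_top_mono hX1 measure_Icc_lt_top).ne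
    (hw.measurable.comp (measurable_id.prodMk measurable_const)).aestronglyMeasurable
    ((ae_restrict_iff' hX).2 (ae_of_all _ fun x hx => hw.abs_le x t (hX1 hx) ht))

theorem integrable_prod (hw : IsBoundedKernel w C) {X Y : Set ℝ} (hX : MeasurableSet X)
    (hY : MeasurableSet Y) (hX1 : X ⊆ Icc 0 1) (hY1 : Y ⊆ Icc 0 1) :
    Integrable (Function.uncurry w) ((volume.restrict X).prod (volume.restrict Y)) :=
  integrable_restrict_prod_of_abs_le hw.measurable hX hY hX1 hY1
    fun p hp => hw.abs_le p.1 p.2 (hX1 hp.1) (hY1 hp.2)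

theorem rectIntegral_eq_integral_swap (hw : IsBoundedKernel w C) {X Y : Set ℝ}
    (hX : MeasurableSet X) (hY : MeasurableSet Y) (hX1 : X ⊆ Icc 0 1) (hY1 : Y ⊆ Icc 0 1) :
    rectIntegral w X Y = ∫ y in Y, ∫ x in X, w x y :=
  integral_integral_swap (hw.integrable_prod hX hY hX1 hY1)

theorem integrableOn_setIntegral_left (hw : IsBoundedKernel w C) {X Y : Set ℝ}
    (hX : MeasurableSet X) (hY : MeasurableSet Y) (hX1 : X ⊆ Icc 0 1) (hY1 : Y ⊆ Icc 0 1) :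
    IntegrableOn (fun y => ∫ x in X, w x y) Y :=
  (hw.integrable_prod hX hY hX1 hY1).integral_prod_right

theorem integrableOn_setIntegral_right (hw : IsBoundedKernel w C) {X Y : Set ℝ}
    (hX : MeasurableSet X) (hY : MeasurableSet Y) (hX1 : X ⊆ Icc 0 1) (hY1 : Y ⊆ Icc 0 1) :
    IntegrableOn (fun x => ∫ y in Y, w x y) X :=
  (hw.integrable_prod hX hY hX1 hY1).integral_prod_left

theorem rectIntegral_comm (hw : IsBoundedKernel w C) (hsymm : ∀ x y, w x y = w y x)
    {X Y : Set ℝ} (hX : MeasurableSet X) (hY : MeasurableSet Y) (hX1 : X ⊆ Icc 0 1)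
    (hY1 : Y ⊆ Icc 0 1) : rectIntegral w X Y = rectIntegral w Y X := by
  rw [hw.rectIntegral_eq_integral_swap hX hY hX1 hY1, rectIntegral]
  exact integral_congr_ae (ae_of_all _ fun y =>
    integral_congr_ae (ae_of_all _ fun x => hsymm x y))

theorem rectIntegral_union_left (hw : IsBoundedKernel w C) {X X' Y : Set ℝ}
    (hX : MeasurableSet X) (hX' : MeasurableSet X') (hY : MeasurableSet Y) (hX1 : X ⊆ Icc 0 1)
    (hX'1 : X' ⊆ Icc 0 1) (hY1 : Y ⊆ Icc 0 1) (hXX' : AEDisjoint volume X X') :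
    rectIntegral w (X ∪ X') Y = rectIntegral w X Y + rectIntegral w X' Y :=
  setIntegral_union₀ hXX' hX'.nullMeasurableSet
    (hw.integrableOn_setIntegral_right hX hY hX1 hY1)
    (hw.integrableOn_setIntegral_right hX' hY hX'1 hY1)

theorem integrable_gammaKernel (hw : IsBoundedKernel w C) {A : Set ℝ} (hA : MeasurableSet A)
    (hA1 : A ⊆ Icc 0 1) :
    Integrable (gammaKernel w A)
      ((volume.restrict (Icc 0 1)).prod (volume.restrict (Icc 0 1))) :=
  integrable_restrict_prod_of_abs_le (measurable_gammaKernel hw.measurable hA) measurableSet_Icc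
    measurableSet_Icc subset_rfl subset_rfl fun p hp => by
      rw [abs_of_nonneg (gammaKernel_nonneg w A p)]
      exact hw.gammaKernel_le hA1 hp

theorem integrableOn_gammaKernel_slice (hw : IsBoundedKernel w C) {A : Set ℝ}
    (hA : MeasurableSet A) (hA1 : A ⊆ Icc 0 1) {y : ℝ} (hy : y ∈ Icc (0:ℝ) 1) :
    IntegrableOn (fun z => gammaKernel w A (y, z)) (Icc 0 1) :=
  Measure.integrableOn_of_bounded measure_Icc_lt_top.ne
    ((measurable_gammaKernel hw.measurable hA).comp measurable_prodMk_left).aestronglyMeasurable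
    ((ae_restrict_iff' measurableSet_Icc).2 (ae_of_all _ fun z hz => by
      rw [Real.norm_of_nonneg (gammaKernel_nonneg w A _)]
      exact hw.gammaKernel_le hA1 ⟨hy, hz⟩))

theorem sub_le_gammaKernel_of_forall_le (hw : IsBoundedKernel w C) {A : Set ℝ}
    (hA : MeasurableSet A) (hA1 : A ⊆ Icc 0 1) {y z : ℝ} (hy : y ∈ Icc (0:ℝ) 1)
    (hz : z ∈ Icc (0:ℝ) 1) (hAy : ∀ x ∈ A, x ≤ y) (hyz : y < z) :
    (∫ x in A, w x z) - ∫ x in A, w x y ≤ gammaKernel w A (y, z) := by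
  have hA_eq : A ∩ Icc 0 y = A := inter_eq_left.2 fun x hx => ⟨(hA1 hx).1, hAy x hx⟩
  rw [gammaKernel, if_pos hyz, hA_eq,
    integral_sub (hw.integrableOn_slice hA hA1 hz) (hw.integrableOn_slice hA hA1 hy)]
  exact (le_max_left _ _).trans (le_add_of_nonneg_right (le_max_right _ _))

theorem sub_le_gammaKernel_of_forall_ge (hw : IsBoundedKernel w C) {A : Set ℝ}
    (hA : MeasurableSet A) (hA1 : A ⊆ Icc 0 1) {y z : ℝ} (hy : y ∈ Icc (0:ℝ) 1)
    (hz : z ∈ Icc (0:ℝ) 1) (hzA : ∀ x ∈ A, z ≤ x) (hyz : y < z) :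
    (∫ x in A, w x y) - ∫ x in A, w x z ≤ gammaKernel w A (y, z) := by
  have hA_eq : A ∩ Icc z 1 = A := inter_eq_left.2 fun x hx => ⟨hzA x hx, (hA1 hx).2⟩
  rw [gammaKernel, if_pos hyz, hA_eq,
    integral_sub (hw.integrableOn_slice hA hA1 hy) (hw.integrableOn_slice hA hA1 hz)]
  exact (le_max_left _ _).trans (le_add_of_nonneg_left (le_max_right _ _))

theorem setIntegral_sub_le_gammaA (hw : IsBoundedKernel w C) {A B D : Set ℝ}
    (hA : MeasurableSet A) (hB : MeasurableSet B) (hD : MeasurableSet D) (hA1 : A ⊆ Icc 0 1)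
    (hB1 : B ⊆ Icc 0 1) (hD1 : D ⊆ Icc 0 1) (hBD : ∀ y ∈ B, ∀ z ∈ D, y ≤ z) {g : ℝ → ℝ}
    (hgB : IntegrableOn g B) (hgD : IntegrableOn g D)
    (hg : ∀ y ∈ B, ∀ z ∈ D, y < z → g z - g y ≤ gammaKernel w A (y, z)) :
    volume.real B * (∫ z in D, g z) - volume.real D * ∫ y in B, g y ≤ gammaA w A := by
  have hB_fin : volume B ≠ ⊤ := (measure_lt_top_mono hB1 measure_Icc_lt_top).ne
  have hD_fin : volume D ≠ ⊤ := (measure_lt_top_mono hD1 measure_Icc_lt_top).ne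
  have hK : IntegrableOn (fun y => ∫ z in Icc (0:ℝ) 1, gammaKernel w A (y, z)) (Icc 0 1) :=
    (hw.integrable_gammaKernel hA hA1).integral_prod_left
  have h_inner : ∀ y ∈ B,
      ∫ z in D, (g z - g y) ≤ ∫ z in Icc (0:ℝ) 1, gammaKernel w A (y, z) := by
    intro y hy
    have hslice := hw.integrableOn_gammaKernel_slice hA hA1 (hB1 hy)
    calc ∫ z in D, (g z - g y) ≤ ∫ z in D, gammaKernel w A (y, z) := by
          refine setIntegral_mono_on_ae (hgD.sub (integrableOn_const (C := g y) hD_fin))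
            (hslice.mono_set hD1) hD ?_
          -- `hg` only covers `y < z`, and the point `z = y` is null
          filter_upwards [measure_eq_zero_iff_ae_notMem.1 (measure_singleton (μ := volume) y)]
            with z hzy hz
          exact hg y hy z hz ((hBD y hy z hz).lt_of_ne (Ne.symm hzy))
      _ ≤ ∫ z in Icc (0:ℝ) 1, gammaKernel w A (y, z) :=
          setIntegral_mono_set hslice (ae_of_all _ fun z => gammaKernel_nonneg w A _)
            hD1.eventuallyLE
  calc volume.real B * (∫ z in D, g z) - volume.real D * ∫ y in B, g y
      = ∫ y in B, ∫ z in D, (g z - g y) :=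
        (setIntegral_setIntegral_sub hB_fin hD_fin hgB hgD).symm
    _ ≤ ∫ y in B, ∫ z in Icc (0:ℝ) 1, gammaKernel w A (y, z) :=
        setIntegral_mono_on (integrableOn_setIntegral_sub hB_fin hD_fin hgB hgD)
          (hK.mono_set hB1) hB h_inner
    _ ≤ gammaA w A :=
        setIntegral_mono_set hK
          (ae_of_all _ fun y => integral_nonneg fun z => gammaKernel_nonneg w A _)
          hB1.eventuallyLE

theorem rectIntegral_sub_le_gammaA_of_forall_le (hw : IsBoundedKernel w C) {A B D : Set ℝ}
    (hA : MeasurableSet A) (hB : MeasurableSet B) (hD : MeasurableSet D) (hA1 : A ⊆ Icc 0 1)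
    (hB1 : B ⊆ Icc 0 1) (hD1 : D ⊆ Icc 0 1) (hAB : ∀ x ∈ A, ∀ y ∈ B, x ≤ y)
    (hBD : ∀ y ∈ B, ∀ z ∈ D, y ≤ z) :
    volume.real B * rectIntegral w A D - volume.real D * rectIntegral w A B ≤ gammaA w A := by
  rw [hw.rectIntegral_eq_integral_swap hA hD hA1 hD1,
    hw.rectIntegral_eq_integral_swap hA hB hA1 hB1]
  exact hw.setIntegral_sub_le_gammaA hA hB hD hA1 hB1 hD1 hBD
    (hw.integrableOn_setIntegral_left hA hB hA1 hB1)
    (hw.integrableOn_setIntegral_left hA hD hA1 hD1) fun y hy z hz hyz =>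
      hw.sub_le_gammaKernel_of_forall_le hA hA1 (hB1 hy) (hD1 hz)
        (fun x hx => hAB x hx y hy) hyz

theorem rectIntegral_sub_le_gammaA_of_forall_ge (hw : IsBoundedKernel w C) {A B D : Set ℝ}
    (hA : MeasurableSet A) (hB : MeasurableSet B) (hD : MeasurableSet D) (hA1 : A ⊆ Icc 0 1)
    (hB1 : B ⊆ Icc 0 1) (hD1 : D ⊆ Icc 0 1) (hBD : ∀ y ∈ B, ∀ z ∈ D, y ≤ z)
    (hDA : ∀ z ∈ D, ∀ x ∈ A, z ≤ x) :
    volume.real D * rectIntegral w A B - volume.real B * rectIntegral w A D ≤ gammaA w A := by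
  have h := hw.setIntegral_sub_le_gammaA (g := fun t => -∫ x in A, w x t)
    hA hB hD hA1 hB1 hD1 hBD (hw.integrableOn_setIntegral_left hA hB hA1 hB1).neg
    (hw.integrableOn_setIntegral_left hA hD hA1 hD1).neg fun y hy z hz hyz =>
      (neg_sub_neg _ _).trans_le <|
        hw.sub_le_gammaKernel_of_forall_ge hA hA1 (hB1 hy) (hD1 hz) (hDA z hz) hyz
  rw [hw.rectIntegral_eq_integral_swap hA hD hA1 hD1,
    hw.rectIntegral_eq_integral_swap hA hB hA1 hB1]
  simp only [integral_neg] at h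
  linarith

end IsBoundedKernel

/-- Lower bound on `Γ(w)` from ordered rectangles: if `S_u ≤ S_l ≤ T_l ≤ T_u` all have
measure at least `α`, then `Γ(w) ≥ α³ (w̄(S_u,T_u) − w̄(S_l,T_l))`. -/
theorem gamma_lower_bound (w : ℝ → ℝ → ℝ)
    (hmeas : Measurable (Function.uncurry w))
    (hsymm : ∀ x y, w x y = w y x)
    (C : ℝ) (hbdd : ∀ x y : ℝ, x ∈ Icc (0:ℝ) 1 → y ∈ Icc (0:ℝ) 1 → |w x y| ≤ C)
    (α : ℝ) (hα : 0 < α)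
    (Su Sl Tl Tu : Set ℝ)
    (hSu : MeasurableSet Su) (hSl : MeasurableSet Sl)
    (hTl : MeasurableSet Tl) (hTu : MeasurableSet Tu)
    (hSu1 : Su ⊆ Icc 0 1) (hSl1 : Sl ⊆ Icc 0 1)
    (hTl1 : Tl ⊆ Icc 0 1) (hTu1 : Tu ⊆ Icc 0 1)
    (hmSu : α ≤ (volume Su).toReal) (hmSl : α ≤ (volume Sl).toReal)
    (hmTl : α ≤ (volume Tl).toReal) (hmTu : α ≤ (volume Tu).toReal)
    (h1 : ∀ x ∈ Su, ∀ y ∈ Sl, x ≤ y)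
    (h2 : ∀ x ∈ Sl, ∀ y ∈ Tl, x ≤ y)
    (h3 : ∀ x ∈ Tl, ∀ y ∈ Tu, x ≤ y) :
    α ^ 3 * (avgOn w Su Tu - avgOn w Sl Tl) ≤ Gamma w := by
  have hw : IsBoundedKernel w C := ⟨hmeas, hbdd⟩
  have hSuTl := forall_le_trans_of_nonempty h1 h2
    (nonempty_of_measure_ne_zero (ENNReal.toReal_pos_iff.1 (hα.trans_le hmSl)).1.ne')
  have hSlTu := forall_le_trans_of_nonempty h2 h3
    (nonempty_of_measure_ne_zero (ENNReal.toReal_pos_iff.1 (hα.trans_le hmTl)).1.ne')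
  have h_l := hw.rectIntegral_sub_le_gammaA_of_forall_le hSl hTl hTu hSl1 hTl1 hTu1 h2 h3
  have h_u := hw.rectIntegral_sub_le_gammaA_of_forall_ge hTu hSu hSl hTu1 hSu1 hSl1 h1 hSlTu
  have h_lu := hw.rectIntegral_sub_le_gammaA_of_forall_le (hSu.union hSl) hTl hTu
    (union_subset hSu1 hSl1) hTl1 hTu1 (fun x hx y hy => hx.elim (hSuTl x · y hy) (h2 x · y hy)) h3
  have h_ul := hw.rectIntegral_sub_le_gammaA_of_forall_ge (hTl.union hTu) hSu hSl
    (union_subset hTl1 hTu1) hSu1 hSl1 h1 (fun z hz x hx => hx.elim (h2 z hz x ·) (hSlTu z hz x ·))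
  rw [hw.rectIntegral_union_left hSu hSl hTu hSu1 hSl1 hTu1 (aedisjoint_of_forall_le h1),
    hw.rectIntegral_union_left hSu hSl hTl hSu1 hSl1 hTl1 (aedisjoint_of_forall_le h1)] at h_lu
  rw [hw.rectIntegral_union_left hTl hTu hSu hTl1 hTu1 hSu1 (aedisjoint_of_forall_le h3),
    hw.rectIntegral_union_left hTl hTu hSl hTl1 hTu1 hSl1 (aedisjoint_of_forall_le h3),
    hw.rectIntegral_comm hsymm hTl hSu hTl1 hSu1, hw.rectIntegral_comm hsymm hTl hSl hTl1 hSl1]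
    at h_ul
  rw [hw.rectIntegral_comm hsymm hTu hSu hTu1 hSu1, hw.rectIntegral_comm hsymm hTu hSl hTu1 hSl1]
    at h_u h_ul
  exact pow_three_mul_sub_div_le hα hmSu hmSl hmTl hmTu hw.Gamma_nonneg
    (h_l.trans (hw.gammaA_le_Gamma hSl hSl1)) (h_u.trans (hw.gammaA_le_Gamma hTu hTu1))
    (h_lu.trans (hw.gammaA_le_Gamma (hSu.union hSl) (union_subset hSu1 hSl1)))
    (h_ul.trans (hw.gammaA_le_Gamma (hTl.union hTu) (union_subset hTl1 hTu1)))
end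

section
/- Let I_i = ((i−1)/4, i/4] for i=1,…,4 and let w:[0,1]²→[0,1] be the symmetric step graphon with w = 0 on I_2×I_3, w = 1/2 on I_1×I_2 ∪ I_1×I_4 ∪ I_3×I_4, w = 1/4 on I_1×I_3 ∪ I_2×I_4, and w = 1 on all remaining cells (symmetrized). Then (1/2)(1/4)³ ≤ Γ(w) ≤ (5/4)·(1/2)(1/4)³; that is, 1/128 ≤ Γ(w) ≤ 5/512. -/
open MeasureTheory Set

/-- The index `i` with `x ∈ I_i = ((i-1)/4, i/4]`; `cell4 x = ⌈4x⌉`. -/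
noncomputable def cell4 (x : ℝ) : ℤ := ⌈4 * x⌉

/-- The step graphon of Remark 4.3: with `I_i = ((i−1)/4, i/4]`, it equals `0` on `I₂×I₃`,
`1/2` on `I₁×I₂ ∪ I₁×I₄ ∪ I₃×I₄`, `1/4` on `I₁×I₃ ∪ I₂×I₄`, and `1` on the remaining
cells, symmetrized. -/
noncomputable def wEx (x y : ℝ) : ℝ :=
  let a := min (cell4 x) (cell4 y)
  let b := max (cell4 x) (cell4 y)
  if a = 2 ∧ b = 3 then 0
  else if (a = 1 ∧ b = 2) ∨ (a = 1 ∧ b = 4) ∨ (a = 3 ∧ b = 4) then 1/2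
  else if (a = 1 ∧ b = 3) ∨ (a = 2 ∧ b = 4) then 1/4
  else 1

/-! For `x ≤ y < z` one has `wEx x z ≤ wEx x y` unless `y ∈ I₃, z ∈ I₄`, and for `y < z ≤ x`
one has `wEx x y ≤ wEx x z` unless `y ∈ I₁, z ∈ I₂`. So only these two pairs of cells contribute
to `Γ(wEx, A)`, and there the inner integrals are explicit in measures of pieces of `A`:
`4 Γ(wEx, A) = ∫_{I₃} [|A ∩ (0,½]|/4 − |A ∩ (½,y]|/2]₊ dy
             + ∫_{I₂} [|A ∩ (½,1]|/4 − |A ∩ [z,½]|/2]₊ dz`,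
the integrands being `leftExcess A` and `rightExcess A`.
For `A = (0, ½]` this is `1/128`. For the upper bound put `bᵢ = |A ∩ Iᵢ|`; then
`|A ∩ (0,½]| ≤ ¼ + b₂` and `|A ∩ (½,y]| ≥ [b₃ − (¾ − y)]₊` (and symmetrically), which leaves
one-variable integrals of clipped ramps. They are piecewise quadratics in `b₂, b₃` whose sum is
at most `5/512`, with equality at `b₂ = b₃ = 1/8`. -/

noncomputable def cellVal (a b : ℤ) : ℝ :=
  if a = 2 ∧ b = 3 then 0
  else if (a = 1 ∧ b = 2) ∨ (a = 1 ∧ b = 4) ∨ (a = 3 ∧ b = 4) then 1/2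
  else if (a = 1 ∧ b = 3) ∨ (a = 2 ∧ b = 4) then 1/4
  else 1

lemma wEx_eq_cellVal (x y : ℝ) :
    wEx x y = cellVal (min (cell4 x) (cell4 y)) (max (cell4 x) (cell4 y)) := rfl

lemma cell4_eq_iff {x : ℝ} {n : ℤ} : cell4 x = n ↔ x ∈ Ioc ((n - 1) / 4 : ℝ) (n / 4) := by
  rw [cell4, Int.ceil_eq_iff, mem_Ioc]
  constructor <;> rintro ⟨h₁, h₂⟩ <;> constructor <;> linarith

lemma cell4_mono : Monotone cell4 := fun _ _ h => Int.ceil_le_ceil (by linarith)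

lemma cell4_nonneg {x : ℝ} (hx : 0 ≤ x) : 0 ≤ cell4 x := Int.ceil_nonneg (by linarith)

lemma cell4_pos {x : ℝ} (hx : 0 < x) : 0 < cell4 x := Int.ceil_pos.2 (by linarith)

lemma cell4_le_four {x : ℝ} (hx : x ≤ 1) : cell4 x ≤ 4 := Int.ceil_le.2 (by push_cast; linarith)

lemma cellVal_le_of_le_right {i j k : ℤ} (hi : 0 ≤ i) (hij : i ≤ j) (hjk : j ≤ k) (hk : k ≤ 4)
    (h : ¬(j = 3 ∧ k = 4)) : cellVal i k ≤ cellVal i j := by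
  have hj : j ≤ 4 := hjk.trans hk
  have : i ≤ 4 := hij.trans hj
  interval_cases i <;> interval_cases j <;> interval_cases k <;> revert h <;> norm_num [cellVal]

lemma cellVal_le_of_le_left {i j k : ℤ} (hj : 1 ≤ j) (hjk : j ≤ k) (hki : k ≤ i) (hi : i ≤ 4)
    (h : ¬(j = 1 ∧ k = 2)) : cellVal j i ≤ cellVal k i := by
  have hk : k ≤ 4 := hki.trans hi
  have : j ≤ 4 := hjk.trans hk
  interval_cases j <;> interval_cases k <;> interval_cases i <;> revert h <;> norm_num [cellVal]

lemma wEx_le_of_le_of_lt {x y z : ℝ} (hx : 0 ≤ x) (hxy : x ≤ y) (hyz : y < z) (hz : z ≤ 1)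
    (h : ¬(cell4 y = 3 ∧ cell4 z = 4)) : wEx x z ≤ wEx x y := by
  have hxy' := cell4_mono hxy
  have hxz' := hxy'.trans (cell4_mono hyz.le)
  rw [wEx_eq_cellVal, wEx_eq_cellVal, min_eq_left hxz', max_eq_right hxz', min_eq_left hxy',
    max_eq_right hxy']
  exact cellVal_le_of_le_right (cell4_nonneg hx) hxy' (cell4_mono hyz.le) (cell4_le_four hz) h

lemma wEx_le_of_lt_of_le {x y z : ℝ} (hy : 0 < y) (hyz : y < z) (hzx : z ≤ x) (hx : x ≤ 1)
    (h : ¬(cell4 y = 1 ∧ cell4 z = 2)) : wEx x y ≤ wEx x z := by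
  have hzx' := cell4_mono hzx
  have hyx' := (cell4_mono hyz.le).trans hzx'
  rw [wEx_eq_cellVal, wEx_eq_cellVal, min_eq_right hyx', max_eq_left hyx', min_eq_right hzx',
    max_eq_left hzx']
  exact cellVal_le_of_le_left (cell4_pos hy) (cell4_mono hyz.le) hzx' (cell4_le_four hx) h

lemma setIntegral_indicator_const_sub_indicator_const {α : Type*} [MeasurableSpace α]
    {μ : Measure α} {S T U : Set α} (hT : MeasurableSet T) (hU : MeasurableSet U) (hTS : T ⊆ S)
    (hUS : U ⊆ S) (hTf : μ T ≠ ⊤) (hUf : μ U ≠ ⊤) (a b : ℝ) :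
    ∫ x in S, (T.indicator (fun _ => a) x - U.indicator (fun _ => b) x) ∂μ
      = μ.real T * a - μ.real U * b := by
  rw [integral_sub, integral_indicator_const _ hT, integral_indicator_const _ hU,
    measureReal_restrict_apply hT, measureReal_restrict_apply hU, inter_eq_left.2 hTS,
    inter_eq_left.2 hUS, smul_eq_mul, smul_eq_mul]
  · exact (integrable_indicator_iff hT).2
      (integrableOn_const (by rwa [Measure.restrict_apply hT, inter_eq_left.2 hTS]))
  · exact (integrable_indicator_iff hU).2
      (integrableOn_const (by rwa [Measure.restrict_apply hU, inter_eq_left.2 hUS]))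

lemma volume_inter_Ioc_ne_top (A : Set ℝ) (a b : ℝ) : volume (A ∩ Ioc a b) ≠ ⊤ :=
  measure_ne_top_of_subset inter_subset_right measure_Ioc_lt_top.ne

lemma volume_inter_Icc_ne_top (A : Set ℝ) (a b : ℝ) : volume (A ∩ Icc a b) ≠ ⊤ :=
  measure_ne_top_of_subset inter_subset_right measure_Icc_lt_top.ne

lemma measureReal_inter_Ioc_le (A : Set ℝ) {a b : ℝ} (h : a ≤ b) :
    volume.real (A ∩ Ioc a b) ≤ b - a :=
  (measureReal_mono inter_subset_right measure_Ioc_lt_top.ne).trans_eq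
    (Real.volume_real_Ioc_of_le h)

lemma measureReal_inter_Ioc_le_add (A : Set ℝ) (a b c : ℝ) :
    volume.real (A ∩ Ioc a c) ≤ volume.real (A ∩ Ioc a b) + volume.real (A ∩ Ioc b c) := by
  refine (measureReal_mono ?_ (measure_union_ne_top (volume_inter_Ioc_ne_top A a b)
    (volume_inter_Ioc_ne_top A b c))).trans (measureReal_union_le _ _)
  rw [← inter_union_distrib_left]
  exact inter_subset_inter_right _ Ioc_subset_Ioc_union_Ioc

noncomputable def gammaIntegrand (w : ℝ → ℝ → ℝ) (A : Set ℝ) (y z : ℝ) : ℝ :=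
  if y < z then
    max (∫ x in A ∩ Icc 0 y, (w x z - w x y)) 0 + max (∫ x in A ∩ Icc z 1, (w x y - w x z)) 0
  else 0

lemma gammaA_eq_integral_gammaIntegrand (w : ℝ → ℝ → ℝ) (A : Set ℝ) :
    gammaA w A = ∫ y in Icc (0 : ℝ) 1, ∫ z in Icc (0 : ℝ) 1, gammaIntegrand w A y z := rfl

noncomputable def leftExcess (A : Set ℝ) (y : ℝ) : ℝ :=
  max (volume.real (A ∩ Ioc 0 (1/2)) * (1/4) - volume.real (A ∩ Ioc (1/2) y) * (1/2)) 0

noncomputable def rightExcess (A : Set ℝ) (z : ℝ) : ℝ :=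
  max (volume.real (A ∩ Ioc (1/2) 1) * (1/4) - volume.real (A ∩ Icc z (1/2)) * (1/2)) 0

lemma leftExcess_antitone (A : Set ℝ) : Antitone (leftExcess A) := fun _ _ h => by
  unfold leftExcess
  gcongr
  exact volume_inter_Ioc_ne_top A _ _

lemma rightExcess_monotone (A : Set ℝ) : Monotone (rightExcess A) := fun _ _ h => by
  unfold rightExcess
  gcongr
  exact volume_inter_Icc_ne_top A _ _

section
variable {A : Set ℝ} {y z : ℝ}

lemma setIntegral_wEx_sub_left_nonpos (hA : MeasurableSet A) (hyz : y < z) (hz : z ≤ 1)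
    (h : ¬(cell4 y = 3 ∧ cell4 z = 4)) : ∫ x in A ∩ Icc 0 y, (wEx x z - wEx x y) ≤ 0 :=
  setIntegral_nonpos (hA.inter measurableSet_Icc) fun _ hx =>
    sub_nonpos.2 (wEx_le_of_le_of_lt hx.2.1 hx.2.2 hyz hz h)

lemma setIntegral_wEx_sub_right_nonpos (hA : MeasurableSet A) (hy : 0 < y) (hyz : y < z)
    (h : ¬(cell4 y = 1 ∧ cell4 z = 2)) : ∫ x in A ∩ Icc z 1, (wEx x y - wEx x z) ≤ 0 :=
  setIntegral_nonpos (hA.inter measurableSet_Icc) fun _ hx =>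
    sub_nonpos.2 (wEx_le_of_lt_of_le hy hyz hx.2.1 hx.2.2 h)

lemma gammaIntegrand_wEx_eq_zero (hA : MeasurableSet A) (hy : 0 < y) (hz : z ≤ 1)
    (h₃₄ : ¬(y ∈ Ioc (1/2 : ℝ) (3/4) ∧ z ∈ Ioc (3/4 : ℝ) 1))
    (h₁₂ : ¬(y ∈ Ioc (0 : ℝ) (1/4) ∧ z ∈ Ioc (1/4 : ℝ) (1/2))) :
    gammaIntegrand wEx A y z = 0 := by
  unfold gammaIntegrand
  split_ifs with hyz
  · have hc₃₄ : ¬(cell4 y = 3 ∧ cell4 z = 4) := fun ⟨hy, hz⟩ => h₃₄ <| by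
      have hy := cell4_eq_iff.1 hy; have hz := cell4_eq_iff.1 hz
      norm_num at hy hz; exact ⟨hy, hz⟩
    have hc₁₂ : ¬(cell4 y = 1 ∧ cell4 z = 2) := fun ⟨hy, hz⟩ => h₁₂ <| by
      have hy := cell4_eq_iff.1 hy; have hz := cell4_eq_iff.1 hz
      norm_num at hy hz; exact ⟨hy, hz⟩
    rw [max_eq_right (setIntegral_wEx_sub_left_nonpos hA hyz hz hc₃₄),
      max_eq_right (setIntegral_wEx_sub_right_nonpos hA hy hyz hc₁₂), add_zero]
  · rfl

lemma setIntegral_wEx_sub_left_of_mem_three_four (hA : MeasurableSet A)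
    (hy : y ∈ Ioc (1/2 : ℝ) (3/4)) (hz : z ∈ Ioc (3/4 : ℝ) 1) :
    ∫ x in A ∩ Icc 0 y, (wEx x z - wEx x y)
      = volume.real (A ∩ Ioc 0 (1/2)) * (1/4) - volume.real (A ∩ Ioc (1/2) y) * (1/2) := by
  have hcy : cell4 y = 3 := cell4_eq_iff.2 (by norm_num; exact hy)
  have hcz : cell4 z = 4 := cell4_eq_iff.2 (by norm_num; exact hz)
  rw [← setIntegral_indicator_const_sub_indicator_const (S := A ∩ Icc 0 y)
    (hA.inter measurableSet_Ioc) (hA.inter measurableSet_Ioc)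
    (inter_subset_inter_right _
      (Ioc_subset_Icc_self.trans (Icc_subset_Icc_right (by linarith [hy.1]))))
    (inter_subset_inter_right _ (Ioc_subset_Icc_self.trans (Icc_subset_Icc_left (by norm_num))))
    (volume_inter_Ioc_ne_top A _ _) (volume_inter_Ioc_ne_top A _ _)]
  refine setIntegral_congr_fun (hA.inter measurableSet_Icc) fun x ⟨hxA, hx0, hxy⟩ => ?_
  classical
  simp only [indicator_apply, mem_inter_iff, hxA, true_and, mem_Ioc, wEx_eq_cellVal, hcy, hcz]
  rcases hx0.eq_or_lt with rfl | hx0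
  · norm_num [cell4, cellVal]
  rcases le_or_gt x (1/4) with hx1 | hx1
  · rw [cell4_eq_iff (n := 1) |>.2 (by norm_num; exact ⟨hx0, hx1⟩)]
    grind [cellVal]
  rcases le_or_gt x (1/2) with hx2 | hx2
  · rw [cell4_eq_iff (n := 2) |>.2 (by norm_num; exact ⟨hx1, hx2⟩)]
    grind [cellVal]
  · rw [cell4_eq_iff (n := 3) |>.2 (by norm_num; exact ⟨hx2, hxy.trans hy.2⟩)]
    grind [cellVal]

lemma setIntegral_wEx_sub_right_of_mem_one_two (hA : MeasurableSet A)
    (hy : y ∈ Ioc (0 : ℝ) (1/4)) (hz : z ∈ Ioc (1/4 : ℝ) (1/2)) :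
    ∫ x in A ∩ Icc z 1, (wEx x y - wEx x z)
      = volume.real (A ∩ Ioc (1/2) 1) * (1/4) - volume.real (A ∩ Icc z (1/2)) * (1/2) := by
  have hcy : cell4 y = 1 := cell4_eq_iff.2 (by norm_num; exact hy)
  have hcz : cell4 z = 2 := cell4_eq_iff.2 (by norm_num; exact hz)
  rw [← setIntegral_indicator_const_sub_indicator_const (S := A ∩ Icc z 1)
    (hA.inter measurableSet_Ioc) (hA.inter measurableSet_Icc)
    (inter_subset_inter_right _
      (Ioc_subset_Icc_self.trans (Icc_subset_Icc_left (by linarith [hz.2]))))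
    (inter_subset_inter_right _ (Icc_subset_Icc_right (by norm_num)))
    (volume_inter_Ioc_ne_top A _ _) (volume_inter_Icc_ne_top A _ _)]
  refine setIntegral_congr_fun (hA.inter measurableSet_Icc) fun x ⟨hxA, hzx, hx1⟩ => ?_
  classical
  simp only [indicator_apply, mem_inter_iff, hxA, true_and, mem_Ioc, mem_Icc, wEx_eq_cellVal,
    hcy, hcz]
  rcases le_or_gt x (1/2) with hx2 | hx2
  · rw [cell4_eq_iff (n := 2) |>.2 (by norm_num; exact ⟨hz.1.trans_le hzx, hx2⟩)]
    grind [cellVal]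
  rcases le_or_gt x (3/4) with hx3 | hx3
  · rw [cell4_eq_iff (n := 3) |>.2 (by norm_num; exact ⟨hx2, hx3⟩)]
    grind [cellVal]
  · rw [cell4_eq_iff (n := 4) |>.2 (by norm_num; exact ⟨hx3, hx1⟩)]
    grind [cellVal]

lemma gammaIntegrand_wEx_of_mem_three_four (hA : MeasurableSet A)
    (hy : y ∈ Ioc (1/2 : ℝ) (3/4)) (hz : z ∈ Ioc (3/4 : ℝ) 1) :
    gammaIntegrand wEx A y z = leftExcess A y := by
  have hyz : y < z := hy.2.trans_lt hz.1
  rw [gammaIntegrand, if_pos hyz, setIntegral_wEx_sub_left_of_mem_three_four hA hy hz,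
    max_eq_right (setIntegral_wEx_sub_right_nonpos hA (by linarith [hy.1]) hyz
      (by rw [cell4_eq_iff (n := 3) |>.2 (by norm_num; exact hy)]; norm_num)),
    add_zero, leftExcess]

lemma gammaIntegrand_wEx_of_mem_one_two (hA : MeasurableSet A)
    (hy : y ∈ Ioc (0 : ℝ) (1/4)) (hz : z ∈ Ioc (1/4 : ℝ) (1/2)) :
    gammaIntegrand wEx A y z = rightExcess A z := by
  have hyz : y < z := hy.2.trans_lt hz.1
  rw [gammaIntegrand, if_pos hyz, setIntegral_wEx_sub_right_of_mem_one_two hA hy hz,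
    max_eq_right (setIntegral_wEx_sub_left_nonpos hA hyz (by linarith [hz.2])
      (by rw [cell4_eq_iff (n := 1) |>.2 (by norm_num; exact hy)]; norm_num)),
    zero_add, rightExcess]

lemma integral_gammaIntegrand_wEx (hA : MeasurableSet A) (hy : y ∈ Ioc (0 : ℝ) 1) :
    ∫ z in Icc 0 1, gammaIntegrand wEx A y z
      = (Ioc (1/2 : ℝ) (3/4)).indicator (fun y => leftExcess A y / 4) y
        + (Ioc (0 : ℝ) (1/4)).indicator
            (fun _ => ∫ z in Ioc (1/4 : ℝ) (1/2), rightExcess A z) y := by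
  have hIcc {a b : ℝ} (ha : 0 ≤ a) (hb : b ≤ 1) : Icc (0 : ℝ) 1 ∩ Ioc a b = Ioc a b :=
    inter_eq_right.2 (Ioc_subset_Icc_self.trans (Icc_subset_Icc ha hb))
  by_cases h₁ : y ∈ Ioc (0 : ℝ) (1/4)
  · have h₃ : y ∉ Ioc (1/2 : ℝ) (3/4) := fun h => by linarith [h.1, h₁.2]
    rw [indicator_of_notMem h₃, indicator_of_mem h₁, zero_add,
      ← hIcc (by norm_num) (by norm_num), ← setIntegral_indicator measurableSet_Ioc]
    refine setIntegral_congr_fun measurableSet_Icc fun z hz => ?_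
    by_cases hz₂ : z ∈ Ioc (1/4 : ℝ) (1/2)
    · rw [indicator_of_mem hz₂, gammaIntegrand_wEx_of_mem_one_two hA h₁ hz₂]
    · rw [indicator_of_notMem hz₂, gammaIntegrand_wEx_eq_zero hA hy.1 hz.2 (fun h => h₃ h.1)
        (fun h => hz₂ h.2)]
  by_cases h₃ : y ∈ Ioc (1/2 : ℝ) (3/4)
  · rw [indicator_of_notMem h₁, indicator_of_mem h₃, add_zero]
    have : EqOn (gammaIntegrand wEx A y) ((Ioc (3/4 : ℝ) 1).indicator fun _ => leftExcess A y)
        (Icc 0 1) := fun z hz => by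
      by_cases hz₄ : z ∈ Ioc (3/4 : ℝ) 1
      · rw [indicator_of_mem hz₄, gammaIntegrand_wEx_of_mem_three_four hA h₃ hz₄]
      · rw [indicator_of_notMem hz₄, gammaIntegrand_wEx_eq_zero hA hy.1 hz.2
          (fun h => hz₄ h.2) (fun h => h₁ h.1)]
    rw [setIntegral_congr_fun measurableSet_Icc this, setIntegral_indicator measurableSet_Ioc,
      hIcc (by norm_num) le_rfl, setIntegral_const, Real.volume_real_Ioc, smul_eq_mul]
    norm_num
    ring
  · rw [indicator_of_notMem h₁, indicator_of_notMem h₃, add_zero]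
    exact setIntegral_eq_zero_of_forall_eq_zero fun z hz =>
      gammaIntegrand_wEx_eq_zero hA hy.1 hz.2 (fun h => h₃ h.1) (fun h => h₁ h.1)

lemma gammaA_wEx (hA : MeasurableSet A) :
    gammaA wEx A = (∫ y in (1/2 : ℝ)..(3/4), leftExcess A y) / 4
      + (∫ z in (1/4 : ℝ)..(1/2), rightExcess A z) / 4 := by
  have hIoc {a b : ℝ} (ha : 0 ≤ a) (hb : b ≤ 1) : Ioc (0 : ℝ) 1 ∩ Ioc a b = Ioc a b :=
    inter_eq_right.2 (Ioc_subset_Ioc ha hb)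
  have hleft : IntegrableOn (fun y => leftExcess A y / 4) (Ioc (1/2 : ℝ) (3/4)) :=
    ((leftExcess_antitone A).intervalIntegrable.1).div_const 4
  rw [gammaA_eq_integral_gammaIntegrand, integral_Icc_eq_integral_Ioc,
    setIntegral_congr_fun measurableSet_Ioc fun y hy => integral_gammaIntegrand_wEx hA hy,
    integral_add (hleft.integrable_indicator measurableSet_Ioc).integrableOn
      ((integrableOn_const measure_Ioc_lt_top.ne).integrable_indicator
        measurableSet_Ioc).integrableOn,
    setIntegral_indicator measurableSet_Ioc, setIntegral_indicator measurableSet_Ioc,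
    hIoc (by norm_num) (by norm_num), hIoc le_rfl (by norm_num), integral_div, setIntegral_const,
    Real.volume_real_Ioc, smul_eq_mul, intervalIntegral.integral_of_le (by norm_num),
    intervalIntegral.integral_of_le (by norm_num)]
  norm_num
  ring

end

lemma gammaA_wEx_Ioc_zero_half : gammaA wEx (Ioc 0 (1/2)) = 1/128 := by
  have hleft (y : ℝ) : leftExcess (Ioc 0 (1/2)) y = 1/8 := by
    simp [leftExcess, Ioc_inter_Ioc]
    norm_num
  have hright (z : ℝ) : rightExcess (Ioc 0 (1/2)) z = 0 := by
    simp [rightExcess, Ioc_inter_Ioc]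
  simp only [gammaA_wEx measurableSet_Ioc, hleft, hright, intervalIntegral.integral_const]
  norm_num

noncomputable def rampIntegral (L c b : ℝ) : ℝ :=
  c * (L - b) + c * min b (2 * c) - min b (2 * c) ^ 2 / 4

lemma intervalIntegral_max_sub_half {b c : ℝ} (hc : 0 ≤ c) (hb : 0 ≤ b) :
    ∫ s in (0 : ℝ)..b, max (c - s / 2) 0 = c * min b (2 * c) - min b (2 * c) ^ 2 / 4 := by
  have hlin {m : ℝ} (hm₀ : 0 ≤ m) (hm : m ≤ 2 * c) :
      ∫ s in (0 : ℝ)..m, max (c - s / 2) 0 = c * m - m ^ 2 / 4 := by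
    rw [intervalIntegral.integral_congr (g := fun s => c - s / 2) fun s hs =>
      max_eq_left (by rw [uIcc_of_le hm₀] at hs; linarith [hs.2])]
    simp [intervalIntegral.integral_sub, intervalIntegral.integral_div, integral_id]
    ring
  rcases le_total b (2 * c) with h | h
  · rw [min_eq_left h, hlin hb h]
  · have hcont : Continuous fun s : ℝ => max (c - s / 2) 0 := by fun_prop
    rw [min_eq_right h, ← intervalIntegral.integral_add_adjacent_intervals
      (hcont.intervalIntegrable 0 (2 * c)) (hcont.intervalIntegrable _ b),
      hlin (by linarith) le_rfl,
      intervalIntegral.integral_congr (g := fun _ => 0) fun s hs =>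
        max_eq_right (by rw [uIcc_of_le h] at hs; linarith [hs.1])]
    simp

lemma intervalIntegral_ramp {L c b : ℝ} (hc : 0 ≤ c) (hb : 0 ≤ b) (hbL : b ≤ L) :
    ∫ t in (0 : ℝ)..L, max (c - max (b - t) 0 / 2) 0 = rampIntegral L c b := by
  have hcont : Continuous fun t : ℝ => max (c - max (b - t) 0 / 2) 0 := by fun_prop
  rw [← intervalIntegral.integral_add_adjacent_intervals (hcont.intervalIntegrable 0 b)
      (hcont.intervalIntegrable b L),
    intervalIntegral.integral_congr (a := 0) (b := b) (g := fun t => max (c - (b - t) / 2) 0)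
      fun t ht => by rw [uIcc_of_le hb] at ht; simp only [max_eq_left (sub_nonneg.2 ht.2)],
    intervalIntegral.integral_congr (a := b) (b := L) (g := fun _ => c) fun t ht => by
      rw [uIcc_of_le hbL] at ht; simp [max_eq_right (sub_nonpos.2 ht.1), hc],
    intervalIntegral.integral_comp_sub_left (fun s => max (c - s / 2) 0), sub_self, sub_zero,
    intervalIntegral_max_sub_half hc hb, intervalIntegral.integral_const, smul_eq_mul,
    rampIntegral]
  ring

lemma leftExcess_le (A : Set ℝ) {y : ℝ} (hy : y ≤ 3/4) :
    leftExcess A y ≤ max (1/16 + volume.real (A ∩ Ioc (1/4) (1/2)) / 4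
      - max (volume.real (A ∩ Ioc (1/2) (3/4)) - (3/4 - y)) 0 / 2) 0 := by
  refine max_le_max_right 0 ?_
  have h₁ := measureReal_inter_Ioc_le_add A 0 (1/4) (1/2)
  have h₂ := measureReal_inter_Ioc_le A (show (0 : ℝ) ≤ 1/4 by norm_num)
  have h₃ := measureReal_inter_Ioc_le_add A (1/2) y (3/4)
  have h₄ := measureReal_inter_Ioc_le A hy
  have h₅ : max (volume.real (A ∩ Ioc (1/2) (3/4)) - (3/4 - y)) 0
      ≤ volume.real (A ∩ Ioc (1/2) y) := max_le (by linarith) measureReal_nonneg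
  linarith

lemma rightExcess_le (A : Set ℝ) {z : ℝ} (hz : 1/4 ≤ z) :
    rightExcess A z ≤ max (1/16 + volume.real (A ∩ Ioc (1/2) (3/4)) / 4
      - max (volume.real (A ∩ Ioc (1/4) (1/2)) - (z - 1/4)) 0 / 2) 0 := by
  refine max_le_max_right 0 ?_
  have h₁ := measureReal_inter_Ioc_le_add A (1/2) (3/4) 1
  have h₂ := measureReal_inter_Ioc_le A (show (3/4 : ℝ) ≤ 1 by norm_num)
  have h₃ := measureReal_inter_Ioc_le_add A (1/4) z (1/2)
  have h₄ := measureReal_inter_Ioc_le A hz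
  have h₅ : volume.real (A ∩ Ioc z (1/2)) ≤ volume.real (A ∩ Icc z (1/2)) :=
    measureReal_mono (inter_subset_inter_right _ Ioc_subset_Icc_self)
      (volume_inter_Icc_ne_top A _ _)
  have h₆ : max (volume.real (A ∩ Ioc (1/4) (1/2)) - (z - 1/4)) 0
      ≤ volume.real (A ∩ Icc z (1/2)) := max_le (by linarith) measureReal_nonneg
  linarith

lemma integral_leftExcess_le (A : Set ℝ) :
    ∫ y in (1/2 : ℝ)..(3/4), leftExcess A y
      ≤ rampIntegral (1/4) (1/16 + volume.real (A ∩ Ioc (1/4) (1/2)) / 4)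
          (volume.real (A ∩ Ioc (1/2) (3/4))) := by
  set c := 1/16 + volume.real (A ∩ Ioc (1/4) (1/2)) / 4
  set b := volume.real (A ∩ Ioc (1/2) (3/4))
  have hcont : Continuous fun t : ℝ => max (c - max (b - t) 0 / 2) 0 := by fun_prop
  calc ∫ y in (1/2 : ℝ)..(3/4), leftExcess A y
      ≤ ∫ y in (1/2 : ℝ)..(3/4), max (c - max (b - (3/4 - y)) 0 / 2) 0 :=
        intervalIntegral.integral_mono_on (by norm_num)
          (leftExcess_antitone A).intervalIntegrable
          ((hcont.comp (continuous_sub_left _)).intervalIntegrable _ _)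
          fun y hy => leftExcess_le A hy.2
    _ = rampIntegral (1/4) c b := by
        rw [intervalIntegral.integral_comp_sub_left (fun t => max (c - max (b - t) 0 / 2) 0)]
        norm_num
        exact intervalIntegral_ramp (by positivity) measureReal_nonneg
          ((measureReal_inter_Ioc_le A (by norm_num)).trans_eq (by norm_num))

lemma integral_rightExcess_le (A : Set ℝ) :
    ∫ z in (1/4 : ℝ)..(1/2), rightExcess A z
      ≤ rampIntegral (1/4) (1/16 + volume.real (A ∩ Ioc (1/2) (3/4)) / 4)
          (volume.real (A ∩ Ioc (1/4) (1/2))) := by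
  set c := 1/16 + volume.real (A ∩ Ioc (1/2) (3/4)) / 4
  set b := volume.real (A ∩ Ioc (1/4) (1/2))
  have hcont : Continuous fun t : ℝ => max (c - max (b - t) 0 / 2) 0 := by fun_prop
  calc ∫ z in (1/4 : ℝ)..(1/2), rightExcess A z
      ≤ ∫ z in (1/4 : ℝ)..(1/2), max (c - max (b - (z - 1/4)) 0 / 2) 0 :=
        intervalIntegral.integral_mono_on (by norm_num)
          (rightExcess_monotone A).intervalIntegrable
          ((hcont.comp (continuous_sub_right _)).intervalIntegrable _ _)
          fun z hz => rightExcess_le A hz.1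
    _ = rampIntegral (1/4) c b := by
        rw [intervalIntegral.integral_comp_sub_right (fun t => max (c - max (b - t) 0 / 2) 0)]
        norm_num
        exact intervalIntegral_ramp (by positivity) measureReal_nonneg
          ((measureReal_inter_Ioc_le A (by norm_num)).trans_eq (by norm_num))

lemma rampIntegral_add_le {b₂ b₃ : ℝ} (h₂ : 0 ≤ b₂) (h₂' : b₂ ≤ 1/4) (h₃ : 0 ≤ b₃)
    (h₃' : b₃ ≤ 1/4) :
    rampIntegral (1/4) (1/16 + b₂/4) b₃ + rampIntegral (1/4) (1/16 + b₃/4) b₂ ≤ 5/128 := by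
  unfold rampIntegral
  rcases min_cases b₃ (2 * (1/16 + b₂/4)) with ⟨e₃, -⟩ | ⟨e₃, hlt₃⟩ <;>
    rcases min_cases b₂ (2 * (1/16 + b₃/4)) with ⟨e₂, -⟩ | ⟨e₂, hlt₂⟩ <;> rw [e₂, e₃] <;>
    nlinarith [sq_nonneg (b₂ - 1/8), sq_nonneg (b₃ - 1/8)]

lemma gammaA_wEx_le {A : Set ℝ} (hA : MeasurableSet A) : gammaA wEx A ≤ 5/512 := by
  have h₂ := measureReal_inter_Ioc_le A (show (1/4 : ℝ) ≤ 1/2 by norm_num)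
  have h₃ := measureReal_inter_Ioc_le A (show (1/2 : ℝ) ≤ 3/4 by norm_num)
  have := rampIntegral_add_le measureReal_nonneg (h₂.trans_eq (by norm_num)) measureReal_nonneg
    (h₃.trans_eq (by norm_num))
  rw [gammaA_wEx hA]
  linarith [integral_leftExcess_le A, integral_rightExcess_le A]

/-- `(1/2)(1/4)³ ≤ Γ(wEx) ≤ (5/4)(1/2)(1/4)³`, i.e. `1/128 ≤ Γ(wEx) ≤ 5/512`. -/
theorem gamma_of_example : 1/128 ≤ Gamma wEx ∧ Gamma wEx ≤ 5/512 := by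
  have hub : ∀ r ∈ {r : ℝ | ∃ A : Set ℝ, MeasurableSet A ∧ A ⊆ Icc 0 1 ∧ r = gammaA wEx A},
      r ≤ 5/512 := by
    rintro r ⟨A, hA, -, rfl⟩
    exact gammaA_wEx_le hA
  have hmem :
      (1/128 : ℝ) ∈ {r : ℝ | ∃ A : Set ℝ, MeasurableSet A ∧ A ⊆ Icc 0 1 ∧ r = gammaA wEx A} :=
    ⟨Ioc 0 (1/2), measurableSet_Ioc,
      Ioc_subset_Icc_self.trans (Icc_subset_Icc_right (by norm_num)),
      gammaA_wEx_Ioc_zero_half.symm⟩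
  exact ⟨le_csSup ⟨5/512, hub⟩ hmem, Real.sSup_le hub (by norm_num)⟩
end

section
/- Let w be a graphon with Γ(w)>0 and set α = Γ(w)^{2/7}. Define R_w on Δ = {(x,y)∈[0,1]² : x≤y} by R_w(x,y) = sup{ w̄(S,T) : S,T⊆[0,1] measurable, S×T ⊆ [0,x]×[y,1], |S|=|T|=α } (with sup ∅ = 0), and extend symmetrically by R_w(y,x)=R_w(x,y). Then R_w is a Robinson graphon; in particular, if (a,b)∈Δ and (x,y) ∈ ([a,b]×[a,b])∩Δ, then R_w(a,b) ≤ R_w(x,y). -/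
/-!
Moving `(x, y)` towards the diagonal only enlarges the box `[0, x] × [y, 1]` of admissible pairs
`(S, T)`, so `R_w` is Robinson, and averages of a graphon lie in `[0, 1]`.

Measurability is the real issue, since monotonicity in each variable alone does not give it.
For `x ≠ α` the supremum is left-continuous in `x`: a set `S ⊆ [0, x]` of measure `α < x` can be
pushed into some `[0, t]`, `t < x`, changing its average with `T` arbitrarily little. Hence
`R_w(x, y)` is a countable supremum over rationals `q < x` of functions antitone in `y`.
-/

open MeasureTheory Set

/-- A graphon: symmetric, measurable, `[0,1]`-valued on `[0,1]²`. -/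
def IsGraphon (w : ℝ → ℝ → ℝ) : Prop :=
  Measurable (Function.uncurry w) ∧ (∀ x y, w x y = w y x) ∧
    ∀ x y : ℝ, x ∈ Icc (0:ℝ) 1 → y ∈ Icc (0:ℝ) 1 → w x y ∈ Icc (0:ℝ) 1

/-- The Robinson property. -/
def IsRobinson (w : ℝ → ℝ → ℝ) : Prop :=
  ∀ x y z : ℝ, 0 ≤ x → x ≤ y → y ≤ z → z ≤ 1 → w x z ≤ min (w x y) (w y z)

/-- The Robinson approximation `R_w`: for `x ≤ y`,
`R_w(x,y) = sup { w̄(S,T) : S×T ⊆ [0,x]×[y,1], |S|=|T|=α }` (with `sup ∅ = 0`, which is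
the convention of `sSup` on `ℝ`), extended symmetrically. -/
noncomputable def robApprox (w : ℝ → ℝ → ℝ) (α : ℝ) (x y : ℝ) : ℝ :=
  if x ≤ y then
    sSup {r : ℝ | ∃ S T : Set ℝ, MeasurableSet S ∧ MeasurableSet T ∧
      S ×ˢ T ⊆ Icc 0 x ×ˢ Icc y 1 ∧ (volume S).toReal = α ∧ (volume T).toReal = α ∧
      r = avgOn w S T}
  else
    sSup {r : ℝ | ∃ S T : Set ℝ, MeasurableSet S ∧ MeasurableSet T ∧
      S ×ˢ T ⊆ Icc 0 y ×ˢ Icc x 1 ∧ (volume S).toReal = α ∧ (volume T).toReal = α ∧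
      r = avgOn w S T}

open Filter Topology
open scoped ENNReal

lemma Real.sSup_eq_toReal_biSup_coe (s : Set ℝ) :
    sSup s = (⨆ r ∈ s, (r : EReal)).toReal := by
  rcases s.eq_empty_or_nonempty with rfl | hne
  · simp
  have hle : ∀ r ∈ s, (r : EReal) ≤ ⨆ r ∈ s, (r : EReal) := fun r hr =>
    le_iSup₂ (f := fun r (_ : r ∈ s) => (r : EReal)) r hr
  by_cases hs : BddAbove s
  · have : ⨆ r ∈ s, (r : EReal) = (sSup s : ℝ) := by
      refine le_antisymm (iSup₂_le fun r hr => EReal.coe_le_coe_iff.2 (le_csSup hs hr)) ?_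
      refine EReal.ge_of_forall_gt_iff_ge.1 fun z hz => ?_
      obtain ⟨r, hr, hzr⟩ := exists_lt_of_lt_csSup hne (EReal.coe_lt_coe_iff.1 hz)
      exact (EReal.coe_le_coe_iff.2 hzr.le).trans (hle r hr)
    rw [this, EReal.toReal_coe]
  · have : ⨆ r ∈ s, (r : EReal) = ⊤ := by
      refine (EReal.eq_top_iff_forall_lt _).2 fun z => ?_
      obtain ⟨r, hr, hzr⟩ := not_bddAbove_iff.1 hs z
      exact (EReal.coe_lt_coe_iff.2 hzr).trans_le (hle r hr)
    rw [this, Real.sSup_of_not_bddAbove hs, EReal.toReal_top]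

lemma Real.sSup_le_sSup_of_nonneg {s t : Set ℝ} (hst : s ⊆ t) (ht : BddAbove t)
    (ht₀ : ∀ r ∈ t, 0 ≤ r) : sSup s ≤ sSup t := by
  rcases s.eq_empty_or_nonempty with rfl | hs
  · simpa using Real.sSup_nonneg ht₀
  · exact csSup_le_csSup ht hs hst

lemma EReal.coe_le_of_forall_pos_coe_sub_le {a : ℝ} {b : EReal}
    (h : ∀ ε > 0, ((a - ε : ℝ) : EReal) ≤ b) : (a : EReal) ≤ b :=
  EReal.ge_of_forall_gt_iff_ge.1 fun z hz => by
    have hza : z < a := by exact_mod_cast hz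
    simpa using h (a - z) (by linarith)

lemma setIntegral_mem_Icc_of_mem_Icc {X : Type*} [MeasurableSpace X] {μ : Measure X}
    {f : X → ℝ} {s : Set X} {c : ℝ} (hs : MeasurableSet s) (hμs : μ s ≠ ∞)
    (hf : ∀ x ∈ s, f x ∈ Icc 0 c) : ∫ x in s, f x ∂μ ∈ Icc 0 (c * μ.real s) := by
  refine ⟨setIntegral_nonneg hs fun x hx => (hf x hx).1, (le_abs_self _).trans ?_⟩
  rw [← Real.norm_eq_abs]
  refine norm_setIntegral_le_of_norm_le_const hμs.lt_top fun x hx => ?_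
  rw [Real.norm_eq_abs, abs_of_nonneg (hf x hx).1]
  exact (hf x hx).2

lemma setIntegral_le_measureReal {X : Type*} [MeasurableSpace X] {μ : Measure X}
    {f : X → ℝ} {s t : Set X} (hst : s ⊆ t) (hμt : μ t ≠ ∞) (hf : ∀ x ∈ s, |f x| ≤ 1) :
    ∫ x in s, f x ∂μ ≤ μ.real t :=
  calc ∫ x in s, f x ∂μ ≤ 1 * μ.real s :=
        (le_abs_self _).trans (norm_setIntegral_le_of_norm_le_const
          (measure_lt_top_of_subset hst hμt) fun x hx => (Real.norm_eq_abs _).trans_le (hf x hx))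
    _ ≤ μ.real t := by rw [one_mul]; exact measureReal_mono hst hμt

lemma exists_measure_inter_abs_le_ne_zero {X : Type*} [MeasurableSpace X] {μ : Measure X}
    {W : Set X} (hW : μ W ≠ 0) (g : X → ℝ) : ∃ M : ℕ, μ (W ∩ {s | |g s| ≤ M}) ≠ 0 := by
  by_contra! h
  refine hW (measure_mono_null (fun s hs => ?_) (measure_iUnion_null h))
  obtain ⟨M, hM⟩ := exists_nat_ge |g s|
  exact mem_iUnion.2 ⟨M, hs, hM⟩

lemma exists_subset_volume_eq {E : Set ℝ} {a b : ℝ} (hE : MeasurableSet E) (hEab : E ⊆ Icc a b)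
    {m : ℝ≥0∞} (hm : m ≤ volume E) : ∃ P ⊆ E, MeasurableSet P ∧ volume P = m := by
  have hEfin : volume E ≠ ∞ := measure_ne_top_of_subset hEab (by simp [Real.volume_Icc])
  have hfin : ∀ t, volume (E ∩ Iic t) ≠ ∞ := fun t =>
    measure_ne_top_of_subset inter_subset_left hEfin
  set f : ℝ → ℝ := fun t => volume.real (E ∩ Iic t)
  have hf : Continuous f := by
    refine (LipschitzWith.of_le_add fun s t => ?_).continuous
    have hsub : E ∩ Iic s ⊆ (E ∩ Iic t) ∪ Ioc t s := fun r ⟨hrE, hrs⟩ =>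
      (le_or_gt r t).imp (fun h => ⟨hrE, h⟩) fun h => ⟨h, hrs⟩
    calc f s ≤ volume.real ((E ∩ Iic t) ∪ Ioc t s) :=
          measureReal_mono hsub (measure_union_ne_top (hfin t) (by simp [Real.volume_Ioc]))
      _ ≤ f t + volume.real (Ioc t s) := measureReal_union_le _ _
      _ ≤ f t + dist s t := by
          rw [Real.volume_real_Ioc, Real.dist_eq]
          gcongr
          exact max_le (le_abs_self (s - t)) (abs_nonneg (s - t))
  have hlow : f (a - 1) = 0 := by
    have : E ∩ Iic (a - 1) = ∅ := eq_empty_of_forall_notMem fun r ⟨hrE, hr⟩ => by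
      linarith [(hEab hrE).1, show r ≤ a - 1 from hr]
    simp [f, this]
  have hhigh : f b = volume.real E := by
    simp only [f, inter_eq_self_of_subset_left (t := Iic b) fun r hr => (hEab hr).2]
  obtain ⟨t, ht⟩ := intermediate_value_univ (a - 1) b hf (show m.toReal ∈ Icc (f (a - 1)) (f b)
    from ⟨hlow ▸ ENNReal.toReal_nonneg, hhigh ▸ ENNReal.toReal_mono hEfin hm⟩)
  refine ⟨E ∩ Iic t, inter_subset_left, hE.inter measurableSet_Iic, ?_⟩
  exact (ENNReal.toReal_eq_toReal_iff' (hfin t) (ne_top_of_le_ne_top hEfin hm)).1 ht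

lemma measureReal_le_sub_of_subset_Icc {S : Set ℝ} {a b : ℝ} (hS : 0 < volume.real S)
    (hSab : S ⊆ Icc a b) : volume.real S ≤ b - a := by
  have h := (measureReal_mono hSab (measure_Icc_lt_top (μ := volume)).ne).trans_eq
    Real.volume_real_Icc
  rcases le_max_iff.1 h with h | h
  · exact h
  · linarith

lemma exists_lt_lt_volume_Icc {m : ℝ≥0∞} {a x : ℝ} (h : m < volume (Icc a x)) :
    ∃ t < x, m < volume (Icc a t) := by
  have hIcc : Tendsto (fun t => volume (Icc a t)) (𝓝[<] x) (𝓝 (volume (Icc a x))) := by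
    simp only [Real.volume_Icc]
    exact ((ENNReal.continuous_ofReal.comp (continuous_sub_right a)).tendsto x).mono_left
      nhdsWithin_le_nhds
  exact ((hIcc.eventually_const_lt h).and self_mem_nhdsWithin).exists.imp fun t ht => ⟨ht.2, ht.1⟩

lemma tendsto_restrict_Ioi_nhdsLT {S : Set ℝ} {x : ℝ} (hSx : S ⊆ Iic x) :
    Tendsto (fun t => volume.restrict S (Ioi t)) (𝓝[<] x) (𝓝 0) := by
  refine tendsto_of_tendsto_of_tendsto_of_le_of_le tendsto_const_nhds
    (h := fun t => ENNReal.ofReal (x - t)) ?_ (fun _ => zero_le) fun t => ?_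
  · exact ((ENNReal.continuous_ofReal.comp (continuous_sub_left x)).tendsto' x 0
      (by simp)).mono_left nhdsWithin_le_nhds
  · show _ ≤ ENNReal.ofReal (x - t)
    rw [Measure.restrict_apply measurableSet_Ioi, ← Real.volume_Ioc]
    exact measure_mono fun s hs => ⟨hs.1, hSx hs.2⟩

/-- The part of `S` right of `t` is traded for an equal measure of `[a, t] \ S` on which `|g|` is
bounded; the integrals lost and gained both vanish as `t → x⁻`. -/
lemma exists_setIntegral_sub_le_of_subset_Icc_lt {g : ℝ → ℝ} (hg : Measurable g) {S : Set ℝ}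
    {a x : ℝ} (hS : MeasurableSet S) (hSx : S ⊆ Icc a x) (hSvol : volume S < volume (Icc a x))
    (hint : IntegrableOn g S) {ε : ℝ} (hε : 0 < ε) :
    ∃ t < x, ∃ S' ⊆ Icc a t, MeasurableSet S' ∧ volume S' = volume S ∧
      (∫ s in S, g s) - ε ≤ ∫ s in S', g s := by
  obtain ⟨t₀, ht₀x, ht₀⟩ := exists_lt_lt_volume_Icc hSvol
  obtain ⟨M, hM⟩ := exists_measure_inter_abs_le_ne_zero
    ((tsub_pos_of_lt ht₀).trans_le le_measure_sdiff).ne' g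
  have htail := tendsto_restrict_Ioi_nhdsLT fun s hs => (hSx hs).2
  have hbound : Tendsto (fun t => (M : ℝ) * (volume.restrict S (Ioi t)).toReal) (𝓝[<] x)
      (𝓝 0) := by
    simpa using ((ENNReal.tendsto_toReal ENNReal.zero_ne_top).comp htail).const_mul (M : ℝ)
  obtain ⟨t, ⟨ht₀t, htx⟩, hmW, hmM, hmInt⟩ :=
    ((show ∀ᶠ t in 𝓝[<] x, t ∈ Ioo t₀ x from Ioo_mem_nhdsLT ht₀x).and
    ((htail.eventually_le_const (pos_iff_ne_zero.2 hM)).and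
    ((hbound.eventually_le_const (half_pos hε)).and
    ((hint.tendsto_setIntegral_nhds_zero htail).eventually_le_const (half_pos hε))))).exists
  obtain ⟨P, hPW, hP, hPvol⟩ := exists_subset_volume_eq
    ((measurableSet_Icc.diff hS).inter (measurableSet_le hg.abs measurable_const))
    (fun s hs => hs.1.1) hmW
  rw [Measure.restrict_apply measurableSet_Ioi, inter_comm] at hPvol hmM
  rw [Measure.restrict_restrict measurableSet_Ioi, inter_comm] at hmInt
  have hPfin : volume P < ∞ := hPvol ▸ measure_lt_top_of_subset (inter_subset_left.trans hSx)
    measure_Icc_lt_top.ne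
  have hPS : Disjoint (S \ Ioi t) P := disjoint_left.2 fun s hs hsP => (hPW hsP).1.2 hs.1
  have hPint : IntegrableOn g P := Measure.integrableOn_of_bounded (M := M) hPfin.ne
    hg.aestronglyMeasurable (ae_restrict_of_forall_mem hP fun s hs => (hPW hs).2)
  have hPge : -((M : ℝ) * (volume (S ∩ Ioi t)).toReal) ≤ ∫ s in P, g s := by
    have := norm_setIntegral_le_of_norm_le_const hPfin
      fun s hs => (Real.norm_eq_abs (g s)).trans_le (hPW hs).2
    rw [measureReal_def, hPvol, Real.norm_eq_abs] at this
    exact neg_le_of_abs_le this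
  refine ⟨t, htx, (S \ Ioi t) ∪ P, union_subset (fun s hs => ⟨(hSx hs.1).1, not_lt.1 hs.2⟩)
    fun s hs => ⟨(hPW hs).1.1.1, (hPW hs).1.1.2.trans ht₀t.le⟩,
    (hS.diff measurableSet_Ioi).union hP, ?_, ?_⟩
  · rw [measure_union hPS hP, hPvol, measure_sdiff_add_inter S measurableSet_Ioi]
  · rw [setIntegral_union hPS hP (hint.mono_set sdiff_subset) hPint]
    linarith [integral_inter_add_sdiff (measurableSet_Ioi (a := t)) hint]

section Graphon

def IsUnitValued (w : ℝ → ℝ → ℝ) : Prop :=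
  ∀ x y, x ∈ Icc (0:ℝ) 1 → y ∈ Icc (0:ℝ) 1 → w x y ∈ Icc (0:ℝ) 1

variable {w : ℝ → ℝ → ℝ} {α : ℝ}

lemma avgOn_mem_Icc (hw : IsUnitValued w) {S T : Set ℝ} (hS : MeasurableSet S)
    (hT : MeasurableSet T) (hS₁ : S ⊆ Icc 0 1) (hT₁ : T ⊆ Icc 0 1) : avgOn w S T ∈ Icc 0 1 := by
  have hinner : ∀ s ∈ S, ∫ t in T, w s t ∈ Icc 0 (volume.real T) := fun s hs => by
    simpa using setIntegral_mem_Icc_of_mem_Icc hT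
      (measure_ne_top_of_subset hT₁ (measure_Icc_lt_top (μ := volume)).ne)
      fun t ht => hw s t (hS₁ hs) (hT₁ ht)
  have hnum := setIntegral_mem_Icc_of_mem_Icc hS
    (measure_ne_top_of_subset hS₁ (measure_Icc_lt_top (μ := volume)).ne) hinner
  rw [avgOn, ← measureReal_def, ← measureReal_def]
  exact ⟨div_nonneg hnum.1 (by positivity),
    div_le_one_of_le₀ (hnum.2.trans_eq (mul_comm _ _)) (by positivity)⟩

lemma gammaA_le_one (hw : IsUnitValued w) {A : Set ℝ} (hA : A ⊆ Icc 0 1) : gammaA w A ≤ 1 := by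
  have hdiff : ∀ x ∈ A, ∀ y ∈ Icc (0:ℝ) 1, ∀ z ∈ Icc (0:ℝ) 1, |w x z - w x y| ≤ 1 :=
    fun x hx y hy z hz => by
      have hxy := hw x y (hA hx) hy
      have hxz := hw x z (hA hx) hz
      exact abs_sub_le_iff.2 ⟨by linarith [hxy.1, hxz.2], by linarith [hxy.2, hxz.1]⟩
  have hG : ∀ y ∈ Icc (0:ℝ) 1, ∀ z ∈ Icc (0:ℝ) 1, (if y < z then
      max (∫ x in A ∩ Icc 0 y, (w x z - w x y)) 0
        + max (∫ x in A ∩ Icc z 1, (w x y - w x z)) 0 else 0) ∈ Icc (0:ℝ) 1 := by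
    intro y hy z hz
    split_ifs
    · have h₁ : ∫ x in A ∩ Icc 0 y, (w x z - w x y) ≤ y := by
        have := setIntegral_le_measureReal (μ := volume) (inter_subset_right (t := Icc 0 y))
          measure_Icc_lt_top.ne fun x hx => hdiff x hx.1 y hy z hz
        rwa [Real.volume_real_Icc_of_le hy.1, sub_zero] at this
      have h₂ : ∫ x in A ∩ Icc z 1, (w x y - w x z) ≤ 1 - z := by
        have := setIntegral_le_measureReal (μ := volume) (inter_subset_right (t := Icc z 1))
          measure_Icc_lt_top.ne fun x hx => hdiff x hx.1 z hz y hy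
        rwa [Real.volume_real_Icc_of_le hz.2] at this
      exact ⟨by positivity, by linarith [max_le h₁ hy.1, max_le h₂ (sub_nonneg.2 hz.2)]⟩
    · simp
  have hinner := fun y hy => setIntegral_mem_Icc_of_mem_Icc (μ := volume) measurableSet_Icc
    measure_Icc_lt_top.ne (hG y hy)
  simpa [gammaA] using (setIntegral_mem_Icc_of_mem_Icc (μ := volume) measurableSet_Icc
    measure_Icc_lt_top.ne hinner).2

lemma Gamma_le_one (hw : IsUnitValued w) : Gamma w ≤ 1 :=
  Real.sSup_le (by rintro _ ⟨A, -, hA, rfl⟩; exact gammaA_le_one hw hA) zero_le_one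

def valueSet (w : ℝ → ℝ → ℝ) (α x y : ℝ) : Set ℝ :=
  {r : ℝ | ∃ S T : Set ℝ, MeasurableSet S ∧ MeasurableSet T ∧
      S ×ˢ T ⊆ Icc 0 x ×ˢ Icc y 1 ∧ (volume S).toReal = α ∧ (volume T).toReal = α ∧
      r = avgOn w S T}

lemma robApprox_eq_sSup (x y : ℝ) :
    robApprox w α x y = sSup (valueSet w α (min x y) (max x y)) := by
  unfold robApprox
  split_ifs with h
  · rw [min_eq_left h, max_eq_right h]; rfl
  · rw [min_eq_right (le_of_not_ge h), max_eq_left (le_of_not_ge h)]; rfl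

lemma robApprox_of_le {x y : ℝ} (h : x ≤ y) : robApprox w α x y = sSup (valueSet w α x y) := by
  rw [robApprox_eq_sSup, min_eq_left h, max_eq_right h]

lemma robApprox_comm (x y : ℝ) : robApprox w α x y = robApprox w α y x := by
  rw [robApprox_eq_sSup, robApprox_eq_sSup, min_comm, max_comm]

lemma valueSet_mono {x y x' y' : ℝ} (hx : x ≤ x') (hy : y' ≤ y) :
    valueSet w α x y ⊆ valueSet w α x' y' := by
  rintro r ⟨S, T, hS, hT, hST, hSα, hTα, rfl⟩
  exact ⟨S, T, hS, hT, hST.trans (prod_mono (Icc_subset_Icc_right hx) (Icc_subset_Icc_left hy)),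
    hSα, hTα, rfl⟩

lemma avgOn_mem_valueSet {x y : ℝ} {S T : Set ℝ} (hS : MeasurableSet S) (hT : MeasurableSet T)
    (hSx : S ⊆ Icc 0 x) (hTy : T ⊆ Icc y 1) (hSα : (volume S).toReal = α)
    (hTα : (volume T).toReal = α) : avgOn w S T ∈ valueSet w α x y :=
  ⟨S, T, hS, hT, prod_mono hSx hTy, hSα, hTα, rfl⟩

lemma exists_of_mem_valueSet (hα : 0 < α) {x y r : ℝ} (hr : r ∈ valueSet w α x y) :
    ∃ S T : Set ℝ, MeasurableSet S ∧ MeasurableSet T ∧ S ⊆ Icc 0 x ∧ T ⊆ Icc y 1 ∧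
      (volume S).toReal = α ∧ (volume T).toReal = α ∧ r = avgOn w S T := by
  obtain ⟨S, T, hS, hT, hST, hSα, hTα, rfl⟩ := hr
  obtain ⟨hSx, hTy⟩ := (prod_subset_prod_iff.1 hST).resolve_right <| by
    rintro (rfl | rfl) <;> simp_all [hα.ne]
  exact ⟨S, T, hS, hT, hSx, hTy, hSα, hTα, rfl⟩

lemma le_of_mem_valueSet (hα : 0 < α) {x y r : ℝ} (hr : r ∈ valueSet w α x y) :
    α ≤ x ∧ y ≤ 1 - α := by
  obtain ⟨S, T, -, -, hSx, hTy, hSα, hTα, -⟩ := exists_of_mem_valueSet hα hr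
  rw [← measureReal_def] at hSα hTα
  have hS := measureReal_le_sub_of_subset_Icc (hSα ▸ hα) hSx
  have hT := measureReal_le_sub_of_subset_Icc (hTα ▸ hα) hTy
  constructor <;> linarith

lemma valueSet_subset_Icc (hw : IsUnitValued w) (hα : 0 < α) {x y : ℝ} (hx : x ≤ 1) (hy : 0 ≤ y) :
    valueSet w α x y ⊆ Icc 0 1 := by
  intro r hr
  obtain ⟨S, T, hS, hT, hSx, hTy, -, -, rfl⟩ := exists_of_mem_valueSet hα hr
  exact avgOn_mem_Icc hw hS hT (hSx.trans (Icc_subset_Icc_right hx))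
    (hTy.trans (Icc_subset_Icc_left hy))

lemma exists_mem_valueSet_rat_sub_le (hwm : Measurable (Function.uncurry w)) (hw : IsUnitValued w)
    (hα₀ : 0 < α) (hα₁ : α ≤ 1) {x y r ε : ℝ} (hx : α < x) (hr : r ∈ valueSet w α x y)
    (hε : 0 < ε) : ∃ q : ℚ, (q : ℝ) < x ∧ ∃ r' ∈ valueSet w α q y, r - ε ≤ r' := by
  obtain ⟨S, T, hS, hT, hSx, hTy, hSα, hTα, rfl⟩ := exists_of_mem_valueSet hα₀ hr
  set g : ℝ → ℝ := fun s => ∫ t in T, w s t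
  have hg : Measurable g :=
    (hwm.stronglyMeasurable.integral_prod_right (ν := volume.restrict T)).measurable
  have havg : ∀ S', (volume S').toReal = α → avgOn w S' T = (∫ s in S', g s) / (α * α) :=
    fun S' hS'α => by rw [avgOn, hS'α, hTα]
  by_cases hint : IntegrableOn g S
  · have hSvol : volume S < volume (Icc 0 x) := by
      rw [Real.volume_Icc, sub_zero, ENNReal.lt_ofReal_iff_toReal_lt
        (measure_ne_top_of_subset hSx measure_Icc_lt_top.ne), hSα]
      exact hx
    obtain ⟨t, htx, S', hS'x, hS', hS'S, hS'g⟩ := exists_setIntegral_sub_le_of_subset_Icc_lt hg hS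
      hSx hSvol hint (mul_pos hε (mul_pos hα₀ hα₀))
    obtain ⟨q, htq, hqx⟩ := exists_rat_btwn htx
    have hS'α : (volume S').toReal = α := hS'S ▸ hSα
    refine ⟨q, hqx, avgOn w S' T, avgOn_mem_valueSet hS' hT
      (hS'x.trans (Icc_subset_Icc_right htq.le)) hTy hS'α hTα, ?_⟩
    rw [havg S hSα, havg S' hS'α, le_div_iff₀ (mul_pos hα₀ hα₀), sub_mul,
      div_mul_cancel₀ _ (mul_pos hα₀ hα₀).ne']
    exact hS'g
  -- For non-integrable `g` the average is the junk value `0`; `[0, α] × [1 - α, 1]` dominates it.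
  · obtain ⟨q, hαq, hqx⟩ := exists_rat_btwn hx
    have hy : y ≤ 1 - α := (le_of_mem_valueSet hα₀ hr).2
    refine ⟨q, hqx, avgOn w (Icc 0 α) (Icc (1 - α) 1),
      avgOn_mem_valueSet measurableSet_Icc measurableSet_Icc (Icc_subset_Icc_right hαq.le)
        (Icc_subset_Icc_left hy) (by simp [hα₀.le]) (by simp [hα₀.le]), ?_⟩
    rw [havg S hSα, integral_undef hint, zero_div, zero_sub]
    exact (neg_nonpos.2 hε.le).trans (avgOn_mem_Icc hw measurableSet_Icc measurableSet_Icc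
      (Icc_subset_Icc le_rfl (by linarith)) (Icc_subset_Icc (by linarith) (by linarith))).1

/-- `Real.sSup` is `0` both on `∅` and on unbounded sets; taking the supremum in `EReal` keeps
these cases apart, and `toReal` of `⊥` and `⊤` reproduces the junk value. -/
noncomputable def valueSup (w : ℝ → ℝ → ℝ) (α x y : ℝ) : EReal :=
  ⨆ r ∈ valueSet w α x y, (r : EReal)

lemma robApprox_eq_toReal_valueSup (x y : ℝ) :
    robApprox w α x y = (valueSup w α (min x y) (max x y)).toReal := by
  rw [robApprox_eq_sSup, Real.sSup_eq_toReal_biSup_coe, valueSup]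

lemma valueSup_mono {x y x' y' : ℝ} (hx : x ≤ x') (hy : y' ≤ y) :
    valueSup w α x y ≤ valueSup w α x' y' :=
  biSup_mono fun _ hr => valueSet_mono hx hy hr

lemma valueSup_eq_iSup_rat (hwm : Measurable (Function.uncurry w)) (hw : IsUnitValued w)
    (hα₀ : 0 < α) (hα₁ : α ≤ 1) {x : ℝ} (hx : x ≠ α) (y : ℝ) :
    valueSup w α x y = ⨆ q : ℚ, ⨆ _ : (q : ℝ) < x, valueSup w α q y := by
  refine le_antisymm ?_ (iSup₂_le fun q hq => valueSup_mono hq.le le_rfl)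
  rcases hx.lt_or_gt with hx | hx
  · have : valueSet w α x y = ∅ :=
      eq_empty_of_forall_notMem fun r hr => hx.not_ge (le_of_mem_valueSet hα₀ hr).1
    simp [valueSup, this]
  · refine iSup₂_le fun r hr => EReal.coe_le_of_forall_pos_coe_sub_le fun ε hε => ?_
    obtain ⟨q, hqx, r', hr', hle⟩ := exists_mem_valueSet_rat_sub_le hwm hw hα₀ hα₁ hx hr hε
    calc ((r - ε : ℝ) : EReal) ≤ r' := EReal.coe_le_coe_iff.2 hle
      _ ≤ valueSup w α q y := le_iSup₂ (f := fun r (_ : r ∈ valueSet w α q y) => (r : EReal)) r' hr'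
      _ ≤ _ := le_iSup₂ (f := fun (q : ℚ) (_ : (q : ℝ) < x) => valueSup w α q y) q hqx

lemma measurable_valueSup (hwm : Measurable (Function.uncurry w)) (hw : IsUnitValued w)
    (hα₀ : 0 < α) (hα₁ : α ≤ 1) : Measurable fun p : ℝ × ℝ => valueSup w α p.1 p.2 := by
  have hanti : ∀ c, Measurable (valueSup w α c) := fun c =>
    (show Antitone (valueSup w α c) from fun _ _ h => valueSup_mono le_rfl h).measurable
  have : (fun p : ℝ × ℝ => valueSup w α p.1 p.2) = fun p => if p.1 = α then valueSup w α α p.2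
      else ⨆ q : ℚ, if (q : ℝ) < p.1 then valueSup w α q p.2 else ⊥ := by
    funext p
    split_ifs with h
    · rw [h]
    · simp_rw [valueSup_eq_iSup_rat hwm hw hα₀ hα₁ h, iSup_eq_if]
  rw [this]
  refine Measurable.ite (measurable_fst (measurableSet_singleton α))
    ((hanti α).comp measurable_snd) (Measurable.iSup fun q => ?_)
  exact Measurable.ite (measurableSet_lt measurable_const measurable_fst)
    ((hanti q).comp measurable_snd) measurable_const

lemma measurable_robApprox (hwm : Measurable (Function.uncurry w)) (hw : IsUnitValued w)
    (hα₀ : 0 < α) (hα₁ : α ≤ 1) : Measurable (Function.uncurry (robApprox w α)) := by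
  have : Function.uncurry (robApprox w α) =
      fun p => (valueSup w α (min p.1 p.2) (max p.1 p.2)).toReal :=
    funext fun p => robApprox_eq_toReal_valueSup p.1 p.2
  rw [this]
  exact ((measurable_valueSup hwm hw hα₀ hα₁).comp
    ((measurable_fst.min measurable_snd).prodMk (measurable_fst.max measurable_snd))).ereal_toReal

lemma robApprox_mem_Icc (hw : IsUnitValued w) (hα : 0 < α) {x : ℝ} (hx : x ∈ Icc (0:ℝ) 1)
    (y : ℝ) : robApprox w α x y ∈ Icc 0 1 := by
  have h := valueSet_subset_Icc hw hα (min_le_of_left_le hx.2 : min x y ≤ 1)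
    (le_max_of_le_left hx.1 : 0 ≤ max x y)
  rw [robApprox_eq_sSup]
  exact ⟨Real.sSup_nonneg fun r hr => (h hr).1, Real.sSup_le (fun r hr => (h hr).2) zero_le_one⟩

lemma robApprox_le_of_le (hw : IsUnitValued w) (hα : 0 < α) {a b x y : ℝ} (h0a : 0 ≤ a)
    (hax : a ≤ x) (hxy : x ≤ y) (hyb : y ≤ b) (hb1 : b ≤ 1) :
    robApprox w α a b ≤ robApprox w α x y := by
  have h := valueSet_subset_Icc hw hα (hxy.trans (hyb.trans hb1)) (h0a.trans (hax.trans hxy))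
  rw [robApprox_of_le (hax.trans (hxy.trans hyb)), robApprox_of_le hxy]
  exact Real.sSup_le_sSup_of_nonneg (valueSet_mono hax hyb) ⟨1, fun r hr => (h hr).2⟩
    fun r hr => (h hr).1

end Graphon

/-- `R_w` is a Robinson graphon; in particular if `(a,b) ∈ Δ` and
`(x,y) ∈ LR(a,b) = ([a,b]×[a,b]) ∩ Δ`, then `R_w(a,b) ≤ R_w(x,y)`. -/
theorem robApprox_isRobinson (w : ℝ → ℝ → ℝ) (hw : IsGraphon w)
    (hΓ : 0 < Gamma w) (α : ℝ) (hα : α = Gamma w ^ ((2:ℝ)/7)) :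
    IsGraphon (robApprox w α) ∧ IsRobinson (robApprox w α) ∧
      ∀ a b x y : ℝ, 0 ≤ a → a ≤ b → b ≤ 1 →
        a ≤ x → x ≤ b → a ≤ y → y ≤ b → x ≤ y →
        robApprox w α a b ≤ robApprox w α x y := by
  obtain ⟨hwm, -, hw01⟩ := hw
  have hα₀ : 0 < α := hα ▸ Real.rpow_pos_of_pos hΓ _
  have hα₁ : α ≤ 1 := hα ▸ Real.rpow_le_one hΓ.le (Gamma_le_one hw01) (by norm_num)
  refine ⟨⟨measurable_robApprox hwm hw01 hα₀ hα₁, robApprox_comm, fun x y hx _ =>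
    robApprox_mem_Icc hw01 hα₀ hx y⟩, fun x y z h0x hxy hyz hz1 => le_min ?_ ?_,
    fun a b x y h0a _ hb1 hax _ _ hyb hxy => robApprox_le_of_le hw01 hα₀ h0a hax hxy hyb hb1⟩
  · exact robApprox_le_of_le hw01 hα₀ h0x le_rfl hxy hyz hz1
  · exact robApprox_le_of_le hw01 hα₀ h0x hxy hyz le_rfl hz1
end

section
/- With the regions B_k, W_k, G_k defined for a graphon w with Γ(w)>0, α = Γ(w)^{2/7}, and an integer m≥1: (a) if (x₁,y₁), (x₂,y₂) ∈ G_k then UL(x₁,y₁) ∩ LR(x₂,y₂) ⊆ G_k; and (b) for every k = 0,…,m, B_{k+1} ∩ W_k = ∅. -/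
/-!
Both parts are monotonicity facts. A point `r ∈ UL(x,y)` has `UL(r) ⊆ UL(x,y)`, so any witness
pair `S × T` placing `r` in `B_k` also places `(x,y)` in `B_k`; likewise `r ∈ LR(x,y)` gives
`LR(r) ⊆ LR(x,y)` for the witnesses of `W_k`. Hence a point of `UL(p) ∩ LR(q)` outside `G_k` would
push `p` or `q` out of `G_k`. For (b), the thresholds `(k-1)/m` increase with `k`, so `B_{k+1} ⊆ B_k`,
which is disjoint from `W_k`.
-/

open MeasureTheory Set

/-- The region `Δ = {(x,y) ∈ [0,1]² : x ≤ y}` above the diagonal. -/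
def Delta : Set (ℝ × ℝ) := {p | 0 ≤ p.1 ∧ p.1 ≤ p.2 ∧ p.2 ≤ 1}

/-- The upper-left region `UL(x,y) = [0,x] × [y,1]`. -/
def UL (x y : ℝ) : Set (ℝ × ℝ) := Icc 0 x ×ˢ Icc y 1

/-- The lower-right region `LR(x,y) = ([x,y] × [x,y]) ∩ Δ`. -/
def LR (x y : ℝ) : Set (ℝ × ℝ) := (Icc x y ×ˢ Icc x y) ∩ Delta

/-- The `k`-th black region `B_k` (for `0 ≤ k ≤ m+1`), with `B_0 = Δ` and `B_{m+1} = ∅`. -/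
noncomputable def regionB (w : ℝ → ℝ → ℝ) (α : ℝ) (m k : ℕ) : Set (ℝ × ℝ) :=
  if k = 0 then Delta
  else if k = m + 1 then ∅
  else {p | p ∈ Delta ∧ (p.1 = p.2 ∨ ∃ S T : Set ℝ, MeasurableSet S ∧ MeasurableSet T ∧
    S ×ˢ T ⊆ UL p.1 p.2 ∧ (volume S).toReal = α ∧ (volume T).toReal = α ∧
    ((k : ℝ) - 1) / m < avgOn w S T)}

/-- The `k`-th white region `W_k` (for `0 ≤ k ≤ m+1`), with `W_0 = ∅` and `W_{m+1} = Δ`. -/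
noncomputable def regionW (w : ℝ → ℝ → ℝ) (α : ℝ) (m k : ℕ) : Set (ℝ × ℝ) :=
  if k = 0 then ∅
  else if k = m + 1 then Delta
  else {p | p ∈ Delta \ regionB w α m k ∧ ∃ S T : Set ℝ, MeasurableSet S ∧ MeasurableSet T ∧
    S ×ˢ T ⊆ LR p.1 p.2 ∧ (volume S).toReal = α ∧ (volume T).toReal = α ∧
    avgOn w S T ≤ ((k : ℝ) - 1) / m}

/-- The `k`-th grey region `G_k = Δ ∖ (B_k ∪ W_k)`. -/
noncomputable def regionG (w : ℝ → ℝ → ℝ) (α : ℝ) (m k : ℕ) : Set (ℝ × ℝ) :=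
  Delta \ (regionB w α m k ∪ regionW w α m k)

/-- `R_k = B_k ∩ W_{k+1}`. -/
noncomputable def regionR (w : ℝ → ℝ → ℝ) (α : ℝ) (m k : ℕ) : Set (ℝ × ℝ) :=
  regionB w α m k ∩ regionW w α m (k + 1)

variable {w : ℝ → ℝ → ℝ} {α : ℝ} {m k : ℕ}

lemma UL_mono {a b c d : ℝ} (hac : a ≤ c) (hdb : d ≤ b) : UL a b ⊆ UL c d :=
  prod_mono (Icc_subset_Icc le_rfl hac) (Icc_subset_Icc hdb le_rfl)

lemma LR_mono {a b c d : ℝ} (hca : c ≤ a) (hbd : b ≤ d) : LR a b ⊆ LR c d :=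
  inter_subset_inter_left _ (prod_mono (Icc_subset_Icc hca hbd) (Icc_subset_Icc hca hbd))

lemma regionB_subset_Delta : regionB w α m k ⊆ Delta := by
  unfold regionB
  split_ifs
  · exact subset_rfl
  · exact empty_subset _
  · exact fun _ hp => hp.1

lemma mem_regionB_of_mem_UL {p r : ℝ × ℝ} (hp : p ∈ Delta) (hr : r ∈ UL p.1 p.2)
    (hrB : r ∈ regionB w α m k) : p ∈ regionB w α m k := by
  unfold regionB at hrB ⊢
  split_ifs at hrB ⊢
  · exact hp
  · exact hrB
  · obtain ⟨-, hdiag | ⟨S, T, hS, hT, hST, hvS, hvT, havg⟩⟩ := hrB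
    · exact ⟨hp, Or.inl (by linarith [hp.2.1, hr.1.2, hr.2.1])⟩
    · exact ⟨hp, Or.inr ⟨S, T, hS, hT, hST.trans (UL_mono hr.1.2 hr.2.1), hvS, hvT, havg⟩⟩

lemma mem_regionW_of_mem_LR {q r : ℝ × ℝ} (hq : q ∈ Delta \ regionB w α m k)
    (hr : r ∈ LR q.1 q.2) (hrW : r ∈ regionW w α m k) : q ∈ regionW w α m k := by
  unfold regionW at hrW ⊢
  split_ifs at hrW ⊢
  · exact hrW
  · exact hq.1
  · obtain ⟨-, S, T, hS, hT, hST, hvS, hvT, havg⟩ := hrW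
    exact ⟨hq, S, T, hS, hT, hST.trans (LR_mono hr.1.1.1 hr.1.2.2), hvS, hvT, havg⟩

lemma disjoint_regionB_regionW : Disjoint (regionB w α m k) (regionW w α m k) := by
  rw [Set.disjoint_left]
  intro p hB hW
  unfold regionW at hW
  split_ifs at hW with h0 hm
  · exact hW
  · rw [regionB, if_neg h0, if_pos hm] at hB
    exact hB
  · exact hW.1.2 hB

lemma regionB_succ_subset (hk : k ≤ m) : regionB w α m (k + 1) ⊆ regionB w α m k := by
  rcases Nat.eq_zero_or_pos k with rfl | hk0
  · exact regionB_subset_Delta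
  rcases hk.eq_or_lt with rfl | hkm
  · simp [regionB]
  rintro p hp
  rw [regionB, if_neg (by omega), if_neg (by omega)] at hp ⊢
  obtain ⟨hpD, hdiag | ⟨S, T, hS, hT, hST, hvS, hvT, havg⟩⟩ := hp
  · exact ⟨hpD, Or.inl hdiag⟩
  · have hθ : ((k : ℝ) - 1) / m ≤ (((k + 1 : ℕ) : ℝ) - 1) / m := by
      gcongr
      linarith
    exact ⟨hpD, Or.inr ⟨S, T, hS, hT, hST, hvS, hvT, hθ.trans_lt havg⟩⟩

lemma UL_inter_LR_subset_regionG {p q : ℝ × ℝ} (hp : p ∈ regionG w α m k)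
    (hq : q ∈ regionG w α m k) : UL p.1 p.2 ∩ LR q.1 q.2 ⊆ regionG w α m k := by
  rintro r ⟨hrUL, hrLR⟩
  refine ⟨hrLR.2, ?_⟩
  rintro (hrB | hrW)
  · exact hp.2 (Or.inl (mem_regionB_of_mem_UL hp.1 hrUL hrB))
  · have hqB : q ∈ Delta \ regionB w α m k := ⟨hq.1, fun h => hq.2 (Or.inl h)⟩
    exact hq.2 (Or.inr (mem_regionW_of_mem_LR hqB hrLR hrW))

theorem grey_regions_property_general (w : ℝ → ℝ → ℝ)
    (α : ℝ) (m : ℕ) :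
    (∀ k : ℕ, 1 ≤ k → k ≤ m →
      ∀ p ∈ regionG w α m k, ∀ q ∈ regionG w α m k,
        UL p.1 p.2 ∩ LR q.1 q.2 ⊆ regionG w α m k) ∧
      (∀ k : ℕ, k ≤ m → regionB w α m (k + 1) ∩ regionW w α m k = ∅) :=
  ⟨fun _ _ _ _ hp _ hq => UL_inter_LR_subset_regionG hp hq,
    fun _ hk => disjoint_iff_inter_eq_empty.mp
      (disjoint_regionB_regionW.mono_left (regionB_succ_subset hk))⟩

/-- (a) If `(x₁,y₁), (x₂,y₂) ∈ G_k` then `UL(x₁,y₁) ∩ LR(x₂,y₂) ⊆ G_k` (for `1 ≤ k ≤ m`);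
(b) `B_{k+1} ∩ W_k = ∅` for every `k = 0, …, m`. -/
theorem grey_regions_property (w : ℝ → ℝ → ℝ) (hw : IsGraphon w) (hΓ : 0 < Gamma w)
    (α : ℝ) (hα : α = Gamma w ^ ((2:ℝ)/7)) (m : ℕ) (hm : 1 ≤ m) :
    (∀ k : ℕ, 1 ≤ k → k ≤ m →
      ∀ p ∈ regionG w α m k, ∀ q ∈ regionG w α m k,
        UL p.1 p.2 ∩ LR q.1 q.2 ⊆ regionG w α m k) ∧
      (∀ k : ℕ, k ≤ m → regionB w α m (k + 1) ∩ regionW w α m k = ∅) :=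
  grey_regions_property_general w α m
end

section
/- With the regions G_k defined for a graphon w with Γ(w)>0, α = Γ(w)^{2/7}, and an integer m≥1: for every k ∈ {1,…,m}, every β > α, and all measurable S,T ⊆ [0,1] with |S| = |T| = β, the product S×T is not contained in the closure of G_k in ℝ². -/
/-!
Since `G_k ⊆ Δ` and `Δ` is closed, every point of `S` lies weakly left of every point of `T`.
Cut out slices `S₁ ⊆ S`, `T₁ ⊆ T` of measure `α`, leaving points of `S` and of `T` strictly on
both sides of them. Grey points close to (a point of `S` right of `S₁`, a point of `T` left of
`T₁`) have `S₁ × T₁` inside their `UL` region, so not being black forces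
`w̄(S₁, T₁) ≤ (k - 1)/m`. Grey points close to (a point of `S` left of `S₁`, a point of `T` right of
`T₁`) have `S₁ × T₁` inside their `LR` region, so not being white forces the opposite inequality.
-/

open MeasureTheory Set

section Quantiles

variable {S : Set ℝ}

theorem continuous_measure_inter_Iic (hS : volume S ≠ ⊤) :
    Continuous fun t => (volume (S ∩ Iic t)).toReal := by
  have hfin : ∀ t, volume (S ∩ Iic t) ≠ ⊤ := fun t =>
    measure_ne_top_of_subset inter_subset_left hS
  refine (LipschitzWith.of_le_add fun x y => ?_).continuous
  rcases le_total x y with hxy | hyx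
  · have hmono : volume (S ∩ Iic x) ≤ volume (S ∩ Iic y) :=
      measure_mono (inter_subset_inter_right _ (Iic_subset_Iic.2 hxy))
    have := ENNReal.toReal_mono (hfin y) hmono
    linarith [dist_nonneg (x := x) (y := y)]
  · have hcover : S ∩ Iic x ⊆ (S ∩ Iic y) ∪ Ioc y x := by
      rintro z ⟨hzS, hzx⟩
      rcases le_or_gt z y with hzy | hyz
      · exact Or.inl ⟨hzS, hzy⟩
      · exact Or.inr ⟨hyz, hzx⟩
    have hle := ENNReal.toReal_mono
      (ENNReal.add_ne_top.2 ⟨hfin y, by simp [Real.volume_Ioc]⟩)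
      ((measure_mono hcover).trans (measure_union_le _ _))
    rw [ENNReal.toReal_add (hfin y) (by simp [Real.volume_Ioc]), Real.volume_Ioc,
      ENNReal.toReal_ofReal (sub_nonneg.2 hyx)] at hle
    rwa [Real.dist_eq, abs_of_nonneg (sub_nonneg.2 hyx)]

variable {l r : ℝ}

theorem exists_ge_measure_inter_Iic_eq (hS : S ⊆ Icc l r) {a c : ℝ}
    (hac : (volume (S ∩ Iic a)).toReal ≤ c) (hc : c ≤ (volume S).toReal) :
    ∃ u, a ≤ u ∧ (volume (S ∩ Iic u)).toReal = c := by
  have hS_fin : volume S ≠ ⊤ :=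
    measure_ne_top_of_subset hS (by simp [Real.volume_Icc])
  have htop : S ∩ Iic (max a r) = S :=
    inter_eq_left.2 fun s hs => (hS hs).2.trans (le_max_right a r)
  obtain ⟨u, hu, hcu⟩ := intermediate_value_Icc (le_max_left a r)
    (continuous_measure_inter_Iic hS_fin).continuousOn (by rw [htop]; exact ⟨hac, hc⟩)
  exact ⟨u, hu.1, hcu⟩

theorem measure_inter_Ioc_eq_sub (hS : volume S ≠ ⊤) {a u : ℝ} (hau : a ≤ u) :
    (volume (S ∩ Ioc a u)).toReal
      = (volume (S ∩ Iic u)).toReal - (volume (S ∩ Iic a)).toReal := by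
  have hsplit := measure_inter_add_sdiff (μ := volume) (S ∩ Iic u) (measurableSet_Iic (a := a))
  rw [inter_assoc, Iic_inter_Iic, min_eq_right hau, sdiff_eq, inter_assoc, compl_Iic,
    inter_comm (Iic u), Ioi_inter_Iic] at hsplit
  rw [← hsplit, ENNReal.toReal_add (measure_ne_top_of_subset inter_subset_left hS)
    (measure_ne_top_of_subset inter_subset_left hS)]
  ring

theorem exists_Ioc_slice_measure_eq (hS : S ⊆ Icc l r) {α : ℝ} (hα : 0 ≤ α)
    (hαS : α < (volume S).toReal) :
    ∃ a u, (∃ s ∈ S, s < a) ∧ (∃ s ∈ S, u < s) ∧ (volume (S ∩ Ioc a u)).toReal = α := by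
  have hS_fin : volume S ≠ ⊤ :=
    measure_ne_top_of_subset hS (by simp [Real.volume_Icc])
  obtain ⟨γ, hγ, hγα⟩ : ∃ γ > 0, γ + α < (volume S).toReal :=
    ⟨((volume S).toReal - α) / 2, by linarith, by linarith⟩
  have hbot : S ∩ Iic (l - 1) = ∅ :=
    eq_empty_of_forall_notMem fun s ⟨hs, hsl⟩ => by linarith [(hS hs).1, show s ≤ l - 1 from hsl]
  obtain ⟨a, -, ha⟩ := exists_ge_measure_inter_Iic_eq hS (a := l - 1) (c := γ)
    (by simp only [hbot, measure_empty, ENNReal.toReal_zero]; linarith) (by linarith)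
  obtain ⟨u, hau, hu⟩ := exists_ge_measure_inter_Iic_eq hS (a := a) (c := γ + α)
    (by linarith) (by linarith)
  refine ⟨a, u, ?_, ?_, by rw [measure_inter_Ioc_eq_sub hS_fin hau, hu, ha]; ring⟩
  · have hpos : volume (S ∩ Iio a) ≠ 0 := by
      rw [measure_congr ((ae_eq_refl S).inter Iio_ae_eq_Iic)]
      intro h0
      rw [h0, ENNReal.toReal_zero] at ha
      linarith
    obtain ⟨s, hs, hsa⟩ := nonempty_of_measure_ne_zero hpos
    exact ⟨s, hs, hsa⟩
  · by_contra! hle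
    rw [inter_eq_left.2 (show S ⊆ Iic u from hle)] at hu
    linarith

end Quantiles

theorem isClosed_Delta : IsClosed Delta :=
  (isClosed_le continuous_const continuous_fst).inter
    ((isClosed_le continuous_fst continuous_snd).inter (isClosed_le continuous_snd continuous_const))

section Regions

variable {w : ℝ → ℝ → ℝ} {α : ℝ} {m k : ℕ} {p : ℝ × ℝ} {S T : Set ℝ}

theorem avgOn_le_of_mem_regionG_of_subset_UL (hk0 : k ≠ 0) (hkm : k ≠ m + 1)
    (hp : p ∈ regionG w α m k) (hS : MeasurableSet S) (hT : MeasurableSet T)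
    (hST : S ×ˢ T ⊆ UL p.1 p.2) (hSα : (volume S).toReal = α) (hTα : (volume T).toReal = α) :
    avgOn w S T ≤ ((k : ℝ) - 1) / m := by
  by_contra! hlt
  refine hp.2 (Or.inl ?_)
  rw [regionB, if_neg hk0, if_neg hkm]
  exact ⟨hp.1, Or.inr ⟨S, T, hS, hT, hST, hSα, hTα, hlt⟩⟩

theorem lt_avgOn_of_mem_regionG_of_subset_LR (hk0 : k ≠ 0) (hkm : k ≠ m + 1)
    (hp : p ∈ regionG w α m k) (hS : MeasurableSet S) (hT : MeasurableSet T)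
    (hST : S ×ˢ T ⊆ LR p.1 p.2) (hSα : (volume S).toReal = α) (hTα : (volume T).toReal = α) :
    ((k : ℝ) - 1) / m < avgOn w S T := by
  by_contra! hle
  refine hp.2 (Or.inr ?_)
  rw [regionW, if_neg hk0, if_neg hkm]
  exact ⟨⟨hp.1, fun hB => hp.2 (Or.inl hB)⟩, S, T, hS, hT, hST, hSα, hTα, hle⟩

theorem not_prod_subset_closure_regionG (hk0 : k ≠ 0) (hkm : k ≠ m + 1) (hα : 0 ≤ α)
    (hS : MeasurableSet S) (hT : MeasurableSet T) (hS1 : S ⊆ Icc 0 1) (hT1 : T ⊆ Icc 0 1)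
    (hαS : α < (volume S).toReal) (hαT : α < (volume T).toReal) :
    ¬ S ×ˢ T ⊆ closure (regionG w α m k) := by
  intro hsub
  have hΔ : ∀ x ∈ S, ∀ y ∈ T, (x, y) ∈ Delta := fun x hx y hy =>
    closure_minimal sdiff_subset isClosed_Delta (hsub ⟨hx, hy⟩)
  obtain ⟨a, u, ⟨sₗ, hsₗ, hsₗa⟩, ⟨sᵤ, hsᵤ, husᵤ⟩, hSα⟩ := exists_Ioc_slice_measure_eq hS1 hα hαS
  obtain ⟨v, b, ⟨tₗ, htₗ, htₗv⟩, ⟨tᵤ, htᵤ, hbtᵤ⟩, hTα⟩ := exists_Ioc_slice_measure_eq hT1 hα hαT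
  obtain ⟨p, ⟨hup, hpv⟩, hpG⟩ := mem_closure_iff.1 (hsub ⟨hsᵤ, htₗ⟩) _
    (isOpen_Ioi.prod isOpen_Iio) (show (sᵤ, tₗ) ∈ Ioi u ×ˢ Iio v from ⟨husᵤ, htₗv⟩)
  obtain ⟨q, ⟨hqa, hbq⟩, hqG⟩ := mem_closure_iff.1 (hsub ⟨hsₗ, htᵤ⟩) _
    (isOpen_Iio.prod isOpen_Ioi) (show (sₗ, tᵤ) ∈ Iio a ×ˢ Ioi b from ⟨hsₗa, hbtᵤ⟩)
  have hUL : (S ∩ Ioc a u) ×ˢ (T ∩ Ioc v b) ⊆ UL p.1 p.2 := by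
    rintro ⟨x, y⟩ ⟨⟨hx, -, hxu⟩, ⟨hy, hvy, -⟩⟩
    obtain ⟨hx0, -, hy1⟩ := hΔ x hx y hy
    exact ⟨⟨hx0, hxu.trans hup.le⟩, ⟨hpv.le.trans hvy.le, hy1⟩⟩
  have hLR : (S ∩ Ioc a u) ×ˢ (T ∩ Ioc v b) ⊆ LR q.1 q.2 := by
    rintro ⟨x, y⟩ ⟨⟨hx, hax, -⟩, ⟨hy, -, hyb⟩⟩
    have hxy := hΔ x hx y hy
    exact ⟨⟨⟨hqa.le.trans hax.le, hxy.2.1.trans (hyb.trans hbq.le)⟩,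
      ⟨hqa.le.trans (hax.le.trans hxy.2.1), hyb.trans hbq.le⟩⟩, hxy⟩
  exact (avgOn_le_of_mem_regionG_of_subset_UL hk0 hkm hpG (hS.inter measurableSet_Ioc)
    (hT.inter measurableSet_Ioc) hUL hSα hTα).not_gt
    (lt_avgOn_of_mem_regionG_of_subset_LR hk0 hkm hqG (hS.inter measurableSet_Ioc)
      (hT.inter measurableSet_Ioc) hLR hSα hTα)

end Regions

theorem grey_region_small_general (w : ℝ → ℝ → ℝ) (hΓ : 0 < Gamma w)
    (α : ℝ) (hα : α = Gamma w ^ ((2:ℝ)/7)) (m : ℕ)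
    (k : ℕ) (hk1 : 1 ≤ k) (hk2 : k ≤ m)
    (β : ℝ) (hβ : α < β) (S T : Set ℝ)
    (hS : MeasurableSet S) (hT : MeasurableSet T)
    (hS1 : S ⊆ Icc 0 1) (hT1 : T ⊆ Icc 0 1)
    (hmS : (volume S).toReal = β) (hmT : (volume T).toReal = β) :
    ¬ S ×ˢ T ⊆ closure (regionG w α m k) :=
  not_prod_subset_closure_regionG (by omega) (by omega) (hα ▸ Real.rpow_nonneg hΓ.le _)
    hS hT hS1 hT1 (hmS ▸ hβ) (hmT ▸ hβ)

/-- The closure of a grey region `G_k` contains no `β × β` rectangle with `β > α`. -/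
theorem grey_region_small (w : ℝ → ℝ → ℝ) (hw : IsGraphon w) (hΓ : 0 < Gamma w)
    (α : ℝ) (hα : α = Gamma w ^ ((2:ℝ)/7)) (m : ℕ) (hm : 1 ≤ m)
    (k : ℕ) (hk1 : 1 ≤ k) (hk2 : k ≤ m)
    (β : ℝ) (hβ : α < β) (S T : Set ℝ)
    (hS : MeasurableSet S) (hT : MeasurableSet T)
    (hS1 : S ⊆ Icc 0 1) (hT1 : T ⊆ Icc 0 1)
    (hmS : (volume S).toReal = β) (hmT : (volume T).toReal = β) :
    ¬ S ×ˢ T ⊆ closure (regionG w α m k) :=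
  grey_region_small_general w hΓ α hα m k hk1 hk2 β hβ S T hS hT hS1 hT1 hmS hmT
end

section
/- Let u:[0,1]²→[0,1] be a Robinson graphon and let N∈ℕ. Let u^{(N)} be the step graphon obtained by splitting [0,1] into N equal-length intervals I_1,…,I_N and setting u^{(N)} equal to the average (1/(|I_i||I_j|))∫_{I_i×I_j} u on each cell I_i×I_j. Then ‖u − u^{(N)}‖₁ = ∫_{[0,1]²}|u − u^{(N)}| ≤ 7/N. -/
open MeasureTheory Set

/-- The interval `I_i = ((i-1)/N, i/N]`. -/
noncomputable def cellI (N : ℕ) (i : ℤ) : Set ℝ := Ioc (((i : ℝ) - 1) / N) ((i : ℝ) / N)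

/-- The index `i` (namely `⌈Nx⌉`) such that `x ∈ I_i = ((i-1)/N, i/N]`. -/
noncomputable def cellOf (N : ℕ) (x : ℝ) : ℤ := ⌈(N : ℝ) * x⌉

/-- The value `u^{(N)}_{i,j}`: the average of `u` over `I_i × I_j`. -/
noncomputable def stepVal (u : ℝ → ℝ → ℝ) (N : ℕ) (i j : ℤ) : ℝ :=
  avgOn u (cellI N i) (cellI N j)

/-- The step graphon `u^{(N)}`. -/
noncomputable def stepG (u : ℝ → ℝ → ℝ) (N : ℕ) (x y : ℝ) : ℝ :=
  stepVal u N (cellOf N x) (cellOf N y)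

/-!
Write `r x y` for the mean of `u x` over the cell containing `y`; then `u^{(N)} x y` is the mean
of `r · y` over the cell containing `x`. By the Robinson property (and symmetry) the row `u x` is
increasing left of the cell of `x` and decreasing right of it, and the column `r · y` is increasing
left of the cell of `y` and decreasing right of it. Replacing a `[0,1]`-valued function that is
unimodal in this sense by its cell means costs at most `3 / N` in `L¹`: on a monotone stretch the
deviation on one cell is at most `1 / N` times the increment across it, which telescopes to at most
`1 / N` on each side of the peak cell, and the peak cell itself contributes at most `1 / N`. Hence
`‖u - r‖₁ ≤ 3 / N` and, integrating columns first, `‖r - u^{(N)}‖₁ ≤ 3 / N`.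
-/

open Function

noncomputable def cellMean (N : ℕ) (f : ℝ → ℝ) (i : ℤ) : ℝ := N * ∫ t in cellI N i, f t

noncomputable def cellAvg (N : ℕ) (f : ℝ → ℝ) (x : ℝ) : ℝ := cellMean N f (cellOf N x)

lemma integrableOn_Icc_of_mapsTo {f : ℝ → ℝ} {a b m M : ℝ} (hf : Measurable f)
    (h : MapsTo f (Icc a b) (Icc m M)) : IntegrableOn f (Icc a b) :=
  Measure.integrableOn_of_bounded measure_Icc_lt_top.ne hf.aestronglyMeasurable
    (ae_restrict_of_forall_mem measurableSet_Icc fun _ hx => abs_le_max_abs_abs (h hx).1 (h hx).2)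

lemma integrable_uncurry_abs_sub_of_mem_Icc {α β : Type*} [MeasurableSpace α] [MeasurableSpace β]
    {μ : Measure α} {ν : Measure β} [SFinite μ] [SFinite ν] {s : Set α} {t : Set β}
    [IsFiniteMeasure (μ.restrict s)] [IsFiniteMeasure (ν.restrict t)]
    (hs : MeasurableSet s) (ht : MeasurableSet t) {a b : α → β → ℝ}
    (ha : Measurable (uncurry a)) (hb : Measurable (uncurry b))
    (ha01 : ∀ x ∈ s, ∀ y ∈ t, a x y ∈ Icc 0 1) (hb01 : ∀ x ∈ s, ∀ y ∈ t, b x y ∈ Icc 0 1) :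
    Integrable (uncurry fun x y => |a x y - b x y|) ((μ.restrict s).prod (ν.restrict t)) := by
  refine Integrable.of_bound (ha.sub hb).abs.aestronglyMeasurable 1 ?_
  rw [Measure.prod_restrict]
  refine ae_restrict_of_forall_mem (hs.prod ht) fun z hz => ?_
  have haz := ha01 z.1 hz.1 z.2 hz.2
  have hbz := hb01 z.1 hz.1 z.2 hz.2
  rw [uncurry_apply_pair, Real.norm_eq_abs, abs_abs, abs_sub_le_iff]
  constructor <;> linarith [haz.1, haz.2, hbz.1, hbz.2]

lemma integral_integral_le_add_integral_integral_swap {α β : Type*} [MeasurableSpace α]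
    [MeasurableSpace β] {μ : Measure α} {ν : Measure β} [SFinite μ] [SFinite ν]
    {F G H : α → β → ℝ} (hF : Integrable (uncurry F) (μ.prod ν))
    (hG : Integrable (uncurry G) (μ.prod ν)) (hH : Integrable (uncurry H) (μ.prod ν))
    (hle : ∀ x y, F x y ≤ G x y + H x y) :
    ∫ x, ∫ y, F x y ∂ν ∂μ ≤ ∫ x, ∫ y, G x y ∂ν ∂μ + ∫ y, ∫ x, H x y ∂μ ∂ν := by
  rw [← integral_integral_swap hH, integral_integral hF, integral_integral hG,
    integral_integral hH]
  exact (integral_mono hF (hG.add hH) fun z => hle z.1 z.2).trans_eq (integral_add hG hH)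

lemma setIntegral_Ioc_zero_one_le {g : ℝ → ℝ} {C : ℝ} (hg : ∀ x ∈ Ioc 0 1, g x ∈ Icc 0 C) :
    ∫ x in Ioc 0 1, g x ≤ C := by
  have hbound : ∀ x ∈ Ioc (0 : ℝ) 1, ‖g x‖ ≤ C := fun x hx => by
    rw [Real.norm_eq_abs, abs_of_nonneg (hg x hx).1]
    exact (hg x hx).2
  calc ∫ x in Ioc 0 1, g x ≤ ‖∫ x in Ioc 0 1, g x‖ := le_abs_self _
    _ ≤ C * volume.real (Ioc (0 : ℝ) 1) :=
      norm_setIntegral_le_of_norm_le_const measure_Ioc_lt_top hbound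
    _ = C := by simp

section Cells

variable {N : ℕ}

lemma cellI_natCast_add_one (N i : ℕ) : cellI N (i + 1) = Ioc ((i : ℝ) / N) ((i + 1) / N) := by
  simp only [cellI]
  push_cast
  ring_nf

lemma measureReal_cellI (N : ℕ) (i : ℤ) : volume.real (cellI N i) = 1 / N := by
  rw [measureReal_def, cellI, Real.volume_Ioc, show (i : ℝ) / N - (i - 1) / N = 1 / N by ring,
    ENNReal.toReal_ofReal (by positivity)]

lemma mem_cellI_iff (hN : 0 < N) {x : ℝ} {i : ℤ} : x ∈ cellI N i ↔ cellOf N x = i := by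
  have hN' : (0 : ℝ) < N := Nat.cast_pos.2 hN
  rw [cellI, cellOf, mem_Ioc, Int.ceil_eq_iff, div_lt_iff₀ hN', le_div_iff₀ hN']
  constructor <;> rintro ⟨h1, h2⟩ <;> constructor <;> linarith

lemma mem_cellI_cellOf (hN : 0 < N) (x : ℝ) : x ∈ cellI N (cellOf N x) :=
  (mem_cellI_iff hN).2 rfl

lemma exists_cellOf_eq (hN : 0 < N) {x : ℝ} (hx : x ∈ Ioc 0 1) :
    ∃ k : ℕ, k < N ∧ cellOf N x = k + 1 := by
  have hN' : (0 : ℝ) < N := Nat.cast_pos.2 hN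
  have h1 : 0 < cellOf N x := Int.ceil_pos.2 (mul_pos hN' hx.1)
  have h2 : cellOf N x ≤ N := Int.ceil_le.2 (by simpa using mul_le_of_le_one_right hN'.le hx.2)
  exact ⟨(cellOf N x - 1).toNat, by omega, by omega⟩

lemma cellI_natCast_add_one_subset {i : ℕ} (hi : i < N) : cellI N (i + 1) ⊆ Ioc 0 1 := by
  have hN' : (0 : ℝ) < N := Nat.cast_pos.2 (by omega)
  rw [cellI_natCast_add_one]
  refine Ioc_subset_Ioc (by positivity) ((div_le_one hN').2 ?_)
  exact_mod_cast hi

lemma setIntegral_Ioc_zero_one_eq_sum (hN : 0 < N) {g : ℝ → ℝ}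
    (hg : ∀ i < N, IntegrableOn g (cellI N (i + 1))) :
    ∫ t in Ioc 0 1, g t = ∑ i ∈ Finset.range N, ∫ t in cellI N (i + 1), g t := by
  have hunion : Ioc (0 : ℝ) 1 = ⋃ i ∈ Finset.range N, cellI N (i + 1) := by
    refine Subset.antisymm (fun x hx => ?_)
      (iUnion₂_subset fun i hi => cellI_natCast_add_one_subset (Finset.mem_range.1 hi))
    obtain ⟨k, hk, hxk⟩ := exists_cellOf_eq hN hx
    exact mem_biUnion (Finset.mem_range.2 hk) ((mem_cellI_iff hN).2 hxk)
  rw [hunion]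
  refine integral_biUnion_finset _ (fun _ _ => measurableSet_Ioc) (fun i _ j _ hij => ?_)
    (fun i hi => hg i (Finset.mem_range.1 hi))
  refine disjoint_left.2 fun x hxi hxj => hij ?_
  rw [mem_cellI_iff hN] at hxi hxj
  omega

end Cells

section CellMean

variable {N : ℕ} {f : ℝ → ℝ} {i : ℤ} {m M : ℝ}

lemma cellMean_neg : cellMean N (fun x => -f x) i = -cellMean N f i := by
  simp only [cellMean, integral_neg, mul_neg]

lemma cellMean_mem_Icc (hN : 0 < N) (hf : IntegrableOn f (cellI N i))
    (hmM : MapsTo f (cellI N i) (Icc m M)) : cellMean N f i ∈ Icc m M := by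
  have hN' : (0 : ℝ) < N := Nat.cast_pos.2 hN
  have hlow := setIntegral_ge_of_const_le_real (s := cellI N i) measurableSet_Ioc
    measure_Ioc_lt_top.ne (fun t ht => (hmM ht).1) hf
  have hupp := setIntegral_mono_on hf (integrableOn_const measure_Ioc_lt_top.ne) measurableSet_Ioc
    (fun t ht => (hmM ht).2)
  rw [setIntegral_const, smul_eq_mul] at hupp
  rw [measureReal_cellI] at hlow hupp
  constructor
  · calc m = N * (m * (1 / N)) := by field_simp
      _ ≤ cellMean N f i := by rw [cellMean]; gcongr
  · calc cellMean N f i ≤ N * (1 / N * M) := by rw [cellMean]; gcongr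
      _ = M := by field_simp

lemma setIntegral_abs_sub_le_of_mapsTo {c : ℝ} (hmM : MapsTo f (cellI N i) (Icc m M))
    (hc : c ∈ Icc m M) : ∫ t in cellI N i, |f t - c| ≤ (M - m) / N := by
  have hbound : ∀ t ∈ cellI N i, ‖|f t - c|‖ ≤ M - m := fun t ht => by
    rw [Real.norm_eq_abs, abs_abs, abs_sub_le_iff]
    constructor <;> linarith [(hmM ht).1, (hmM ht).2, hc.1, hc.2]
  calc ∫ t in cellI N i, |f t - c| ≤ ‖∫ t in cellI N i, |f t - c|‖ := le_abs_self _
    _ ≤ (M - m) * volume.real (cellI N i) :=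
      norm_setIntegral_le_of_norm_le_const measure_Ioc_lt_top hbound
    _ = (M - m) / N := by rw [measureReal_cellI]; ring

lemma setIntegral_abs_sub_cellMean_le (hN : 0 < N) (hf : IntegrableOn f (cellI N i))
    (hmM : MapsTo f (cellI N i) (Icc m M)) :
    ∫ t in cellI N i, |f t - cellMean N f i| ≤ (M - m) / N :=
  setIntegral_abs_sub_le_of_mapsTo hmM (cellMean_mem_Icc hN hf hmM)

lemma sum_setIntegral_abs_sub_cellMean_le_of_monotoneOn (hN : 0 < N) {a b : ℕ} (hab : a ≤ b)
    (hf : MonotoneOn f (Icc (a / N) (b / N))) :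
    ∑ i ∈ Finset.Ico a b, ∫ t in cellI N (i + 1), |f t - cellMean N f (i + 1)|
      ≤ (f (b / N) - f (a / N)) / N := by
  have hN' : (0 : ℝ) < N := Nat.cast_pos.2 hN
  calc _ ≤ ∑ i ∈ Finset.Ico a b, (f ((i + 1 : ℕ) / N) - f (i / N)) / N := by
        refine Finset.sum_le_sum fun i hi => ?_
        obtain ⟨hai, hib⟩ := Finset.mem_Ico.1 hi
        have hsub : Icc ((i : ℝ) / N) ((i + 1 : ℕ) / N) ⊆ Icc (a / N) (b / N) :=
          Icc_subset_Icc (by gcongr) (by gcongr; omega)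
        have hfi := hf.mono hsub
        refine setIntegral_abs_sub_cellMean_le hN
          ((hfi.integrableOn_isCompact isCompact_Icc).mono_set ?_) fun t ht => ?_
        · rw [cellI_natCast_add_one]; push_cast; exact Ioc_subset_Icc_self
        · rw [cellI_natCast_add_one] at ht
          have ht' : t ∈ Icc ((i : ℝ) / N) ((i + 1 : ℕ) / N) := by
            push_cast; exact Ioc_subset_Icc_self ht
          exact ⟨hfi ⟨le_rfl, by gcongr; omega⟩ ht' ht'.1,
            hfi ht' ⟨by gcongr; omega, le_rfl⟩ ht'.2⟩
    _ = _ := by rw [← Finset.sum_div, Finset.sum_Ico_sub (fun i : ℕ => f (i / N)) hab]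

lemma sum_setIntegral_abs_sub_cellMean_le_of_antitoneOn (hN : 0 < N) {a b : ℕ} (hab : a ≤ b)
    (hf : AntitoneOn f (Icc (a / N) (b / N))) :
    ∑ i ∈ Finset.Ico a b, ∫ t in cellI N (i + 1), |f t - cellMean N f (i + 1)|
      ≤ (f (a / N) - f (b / N)) / N := by
  have key := sum_setIntegral_abs_sub_cellMean_le_of_monotoneOn hN hab hf.neg
  have habs : ∀ (t : ℝ) (j : ℤ),
      |-f t - cellMean N (fun x => -f x) j| = |f t - cellMean N f j| := fun t j => by
    rw [cellMean_neg, neg_sub_neg, abs_sub_comm]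
  simpa only [habs, neg_sub_neg] using key

end CellMean

section CellAvg

variable {N : ℕ} {f : ℝ → ℝ}

lemma cellAvg_mem_Icc (hN : 0 < N) {m M : ℝ} (hf : IntegrableOn f (Ioc 0 1))
    (hmM : MapsTo f (Ioc 0 1) (Icc m M)) {x : ℝ} (hx : x ∈ Ioc 0 1) : cellAvg N f x ∈ Icc m M := by
  obtain ⟨k, hk, hxk⟩ := exists_cellOf_eq hN hx
  rw [cellAvg, hxk]
  exact cellMean_mem_Icc hN (hf.mono_set (cellI_natCast_add_one_subset hk))
    (hmM.mono_left (cellI_natCast_add_one_subset hk))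

lemma setIntegral_abs_sub_cellAvg_eq_sum (hN : 0 < N) (hf : IntegrableOn f (Ioc 0 1)) :
    ∫ x in Ioc 0 1, |f x - cellAvg N f x|
      = ∑ i ∈ Finset.range N, ∫ x in cellI N (i + 1), |f x - cellMean N f (i + 1)| := by
  have hcell : ∀ i : ℕ, EqOn (fun x => |f x - cellMean N f (i + 1)|)
      (fun x => |f x - cellAvg N f x|) (cellI N (i + 1)) := fun i x hx => by
    simp only [cellAvg, (mem_cellI_iff hN).1 hx]
  have hint : ∀ i < N, IntegrableOn (fun x => |f x - cellMean N f (i + 1)|) (cellI N (i + 1)) :=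
    fun i hi => ((hf.mono_set (cellI_natCast_add_one_subset hi)).sub
      (integrableOn_const measure_Ioc_lt_top.ne)).abs
  rw [setIntegral_Ioc_zero_one_eq_sum hN fun i hi =>
    (hint i hi).congr_fun (hcell i) measurableSet_Ioc]
  exact Finset.sum_congr rfl fun i _ => (setIntegral_congr_fun measurableSet_Ioc (hcell i)).symm

theorem setIntegral_abs_sub_cellAvg_le_of_unimodal (hN : 0 < N) (hf : IntegrableOn f (Icc 0 1))
    (h01 : MapsTo f (Icc 0 1) (Icc 0 1)) {k : ℕ} (hk : k < N)
    (hmono : MonotoneOn f (Icc 0 (k / N))) (hanti : AntitoneOn f (Icc ((k + 1) / N) 1)) :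
    ∫ x in Ioc 0 1, |f x - cellAvg N f x| ≤ 3 / N := by
  have hN' : (0 : ℝ) < N := Nat.cast_pos.2 hN
  have hval : ∀ j : ℕ, j ≤ N → f (j / N) ∈ Icc 0 1 := fun j hj =>
    h01 ⟨by positivity, (div_le_one hN').2 (by exact_mod_cast hj)⟩
  have hleft := sum_setIntegral_abs_sub_cellMean_le_of_monotoneOn hN (Nat.zero_le k)
    (by simpa using hmono)
  have hpeak := setIntegral_abs_sub_cellMean_le hN
    (hf.mono_set ((cellI_natCast_add_one_subset hk).trans Ioc_subset_Icc_self))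
    (h01.mono_left ((cellI_natCast_add_one_subset hk).trans Ioc_subset_Icc_self))
  have hright := sum_setIntegral_abs_sub_cellMean_le_of_antitoneOn hN hk
    (by rwa [Nat.cast_add_one, div_self hN'.ne'])
  rw [setIntegral_abs_sub_cellAvg_eq_sum hN (hf.mono_set Ioc_subset_Icc_self),
    ← Finset.sum_range_add_sum_Ico _ hk, Finset.sum_range_succ, Finset.range_eq_Ico]
  have h0 := hval 0 (Nat.zero_le N)
  have hk0 := hval k hk.le
  have hk1 := hval (k + 1) hk
  have hN1 := hval N le_rfl
  simp only [Nat.cast_zero, zero_div] at h0 hleft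
  calc _ ≤ (f (k / N) - f 0) / N + (1 - 0) / N + (f ((k + 1 : ℕ) / N) - f (N / N)) / N := by
        gcongr
    _ ≤ 1 / N + 1 / N + 1 / N := by gcongr <;> linarith [h0.1, hk0.2, hk1.2, hN1.1]
    _ = 3 / N := by ring

end CellAvg

section Measurability

variable {N : ℕ} {g : ℝ → ℝ → ℝ}

lemma measurable_cellOf (N : ℕ) : Measurable (cellOf N) :=
  Int.measurable_ceil.comp (measurable_const_mul _)

lemma measurable_uncurry_cellAvg (hg : Measurable (uncurry g)) :
    Measurable (uncurry fun x y => cellAvg N (g x) y) := by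
  have hmean : Measurable fun p : ℝ × ℤ => cellMean N (g p.1) p.2 := by
    refine measurable_from_prod_countable_left fun i => ?_
    have h : Measurable fun x => ∫ t in cellI N i, g x t :=
      (hg.stronglyMeasurable.integral_prod_right' (ν := volume.restrict (cellI N i))).measurable
    unfold cellMean
    exact h.const_mul _
  have hcell : Measurable fun z : ℝ × ℝ => (z.1, cellOf N z.2) :=
    measurable_fst.prodMk ((measurable_cellOf N).comp measurable_snd)
  have heq : (uncurry fun x y => cellAvg N (g x) y) =
      (fun p : ℝ × ℤ => cellMean N (g p.1) p.2) ∘ fun z : ℝ × ℝ => (z.1, cellOf N z.2) := rfl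
  rw [heq]
  exact hmean.comp hcell

lemma measurable_uncurry_cellAvg_left (hg : Measurable (uncurry g)) :
    Measurable (uncurry fun x y => cellAvg N (fun x' => g x' y) x) := by
  have hswap : Measurable (uncurry fun y x => g x y) := hg.comp measurable_swap
  have heq : (uncurry fun x y => cellAvg N (fun x' => g x' y) x) =
      (uncurry fun y x => cellAvg N (fun x' => g x' y) x) ∘ Prod.swap := rfl
  rw [heq]
  exact (measurable_uncurry_cellAvg hswap).comp measurable_swap

end Measurability

lemma stepG_eq_cellAvg (u : ℝ → ℝ → ℝ) (N : ℕ) (x y : ℝ) :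
    stepG u N x y = cellAvg N (fun x' => cellAvg N (u x') y) x := by
  simp only [stepG, stepVal, avgOn, cellAvg, cellMean, ← measureReal_def, measureReal_cellI,
    integral_const_mul]
  rw [one_div, ← mul_inv, div_inv_eq_mul]
  ring

section Graphon

variable {u : ℝ → ℝ → ℝ} {N : ℕ} {x : ℝ}

lemma IsGraphon.integrableOn_row (hu : IsGraphon u) (hx : x ∈ Icc 0 1) :
    IntegrableOn (u x) (Icc 0 1) :=
  integrableOn_Icc_of_mapsTo hu.1.of_uncurry_left fun _ hy => hu.2.2 x _ hx hy

lemma IsGraphon.cellAvg_row_mem_Icc (hu : IsGraphon u) (hN : 0 < N) (hx : x ∈ Icc 0 1) {y : ℝ}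
    (hy : y ∈ Ioc 0 1) : cellAvg N (u x) y ∈ Icc 0 1 :=
  cellAvg_mem_Icc hN ((hu.integrableOn_row hx).mono_set Ioc_subset_Icc_self)
    (fun _ hy' => hu.2.2 x _ hx (Ioc_subset_Icc_self hy')) hy

lemma IsGraphon.integrableOn_cellAvg_column (hu : IsGraphon u) (hN : 0 < N) {y : ℝ}
    (hy : y ∈ Ioc 0 1) : IntegrableOn (fun x => cellAvg N (u x) y) (Icc 0 1) :=
  integrableOn_Icc_of_mapsTo (measurable_uncurry_cellAvg hu.1).of_uncurry_right
    fun _ hx => hu.cellAvg_row_mem_Icc hN hx hy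

lemma IsGraphon.cellAvg_column_mem_Icc (hu : IsGraphon u) (hN : 0 < N) (hx : x ∈ Ioc 0 1)
    {y : ℝ} (hy : y ∈ Ioc 0 1) : cellAvg N (fun x' => cellAvg N (u x') y) x ∈ Icc 0 1 :=
  cellAvg_mem_Icc hN ((hu.integrableOn_cellAvg_column hN hy).mono_set Ioc_subset_Icc_self)
    (fun _ hx' => hu.cellAvg_row_mem_Icc hN (Ioc_subset_Icc_self hx') hy) hx

lemma IsRobinson.monotoneOn_row (hrob : IsRobinson u) (hsymm : ∀ x y, u x y = u y x)
    (hx : x ≤ 1) : MonotoneOn (u x) (Icc 0 x) := fun s hs t ht hst => by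
  rw [hsymm x s, hsymm x t]
  exact (hrob s t x hs.1 hst ht.2 hx).trans (min_le_right _ _)

lemma IsRobinson.antitoneOn_row (hrob : IsRobinson u) (hx : 0 ≤ x) :
    AntitoneOn (u x) (Icc x 1) := fun s hs t ht hst =>
  (hrob x s t hx hs.1 hst ht.2).trans (min_le_left _ _)

lemma IsRobinson.monotoneOn_cellMean (hrob : IsRobinson u) (hu : IsGraphon u) {i : ℕ}
    (hi : i < N) : MonotoneOn (fun x => cellMean N (u x) (i + 1)) (Icc 0 (i / N)) := by
  have hcell := (cellI_natCast_add_one_subset hi).trans Ioc_subset_Icc_self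
  have hiN : (i : ℝ) / N ≤ 1 := div_le_one_of_le₀ (by exact_mod_cast hi.le) (Nat.cast_nonneg N)
  intro s hs t ht hst
  refine mul_le_mul_of_nonneg_left (setIntegral_mono_on
    ((hu.integrableOn_row ⟨hs.1, hs.2.trans hiN⟩).mono_set hcell)
    ((hu.integrableOn_row ⟨ht.1, ht.2.trans hiN⟩).mono_set hcell) measurableSet_Ioc
    fun y hy => ?_) (Nat.cast_nonneg N)
  have hy1 := (hcell hy).2
  rw [cellI_natCast_add_one] at hy
  exact (hrob s t y hs.1 hst (ht.2.trans hy.1.le) hy1).trans (min_le_right _ _)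

lemma IsRobinson.antitoneOn_cellMean (hrob : IsRobinson u) (hu : IsGraphon u) {i : ℕ}
    (hi : i < N) : AntitoneOn (fun x => cellMean N (u x) (i + 1)) (Icc ((i + 1) / N) 1) := by
  have hcell := (cellI_natCast_add_one_subset hi).trans Ioc_subset_Icc_self
  have hi0 : (0 : ℝ) ≤ (i + 1) / N := by positivity
  intro s hs t ht hst
  refine mul_le_mul_of_nonneg_left (setIntegral_mono_on
    ((hu.integrableOn_row ⟨hi0.trans (hs.1.trans hst), ht.2⟩).mono_set hcell)
    ((hu.integrableOn_row ⟨hi0.trans hs.1, hs.2⟩).mono_set hcell) measurableSet_Ioc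
    fun y hy => ?_) (Nat.cast_nonneg N)
  have hy0 := (hcell hy).1
  rw [cellI_natCast_add_one] at hy
  rw [hu.2.1 t y, hu.2.1 s y]
  exact (hrob y s t hy0 (hy.2.trans hs.1) hst ht.2).trans (min_le_left _ _)

lemma IsRobinson.setIntegral_abs_sub_cellAvg_row_le (hrob : IsRobinson u) (hu : IsGraphon u)
    (hN : 0 < N) (hx : x ∈ Ioc 0 1) :
    ∫ y in Ioc 0 1, |u x y - cellAvg N (u x) y| ≤ 3 / N := by
  obtain ⟨k, hk, hxk⟩ := exists_cellOf_eq hN hx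
  have hxk' : x ∈ Ioc ((k : ℝ) / N) ((k + 1) / N) := by
    rw [← cellI_natCast_add_one, ← hxk]
    exact mem_cellI_cellOf hN x
  have hx' := Ioc_subset_Icc_self hx
  exact setIntegral_abs_sub_cellAvg_le_of_unimodal hN (hu.integrableOn_row hx')
    (fun _ hy => hu.2.2 x _ hx' hy) hk
    ((hrob.monotoneOn_row hu.2.1 hx.2).mono (Icc_subset_Icc_right hxk'.1.le))
    ((hrob.antitoneOn_row hx.1.le).mono (Icc_subset_Icc_left hxk'.2))

lemma IsRobinson.setIntegral_abs_sub_cellAvg_column_le (hrob : IsRobinson u) (hu : IsGraphon u)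
    (hN : 0 < N) {y : ℝ} (hy : y ∈ Ioc 0 1) :
    ∫ x in Ioc 0 1, |cellAvg N (u x) y - cellAvg N (fun x' => cellAvg N (u x') y) x| ≤ 3 / N := by
  obtain ⟨k, hk, hyk⟩ := exists_cellOf_eq hN hy
  have hcol : (fun x => cellAvg N (u x) y) = fun x => cellMean N (u x) (k + 1) := by
    simp only [cellAvg, hyk]
  have hmaps : MapsTo (fun x => cellAvg N (u x) y) (Icc 0 1) (Icc 0 1) :=
    fun _ hx => hu.cellAvg_row_mem_Icc hN hx hy
  refine setIntegral_abs_sub_cellAvg_le_of_unimodal hN (hu.integrableOn_cellAvg_column hN hy)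
    hmaps hk ?_ ?_ <;> rw [hcol]
  exacts [hrob.monotoneOn_cellMean hu hk, hrob.antitoneOn_cellMean hu hk]

end Graphon

/-- For a Robinson graphon `u`, the step approximation satisfies `‖u − u^{(N)}‖₁ ≤ 7/N`. -/
theorem robinson_stepping (u : ℝ → ℝ → ℝ) (hu : IsGraphon u) (hrob : IsRobinson u)
    (N : ℕ) (hN : 1 ≤ N) :
    (∫ x in Icc (0:ℝ) 1, ∫ y in Icc (0:ℝ) 1, |u x y - stepG u N x y|) ≤ 7 / N := by
  have hN0 : 0 < N := hN
  simp_rw [integral_Icc_eq_integral_Ioc, stepG_eq_cellAvg]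
  set r : ℝ → ℝ → ℝ := fun x y => cellAvg N (u x) y
  have hu01 : ∀ x ∈ Ioc (0 : ℝ) 1, ∀ y ∈ Ioc (0 : ℝ) 1, u x y ∈ Icc 0 1 := fun x hx y hy =>
    hu.2.2 x y (Ioc_subset_Icc_self hx) (Ioc_subset_Icc_self hy)
  have hr01 : ∀ x ∈ Ioc (0 : ℝ) 1, ∀ y ∈ Ioc (0 : ℝ) 1, r x y ∈ Icc 0 1 := fun x hx _ hy =>
    hu.cellAvg_row_mem_Icc hN0 (Ioc_subset_Icc_self hx) hy
  have hs01 : ∀ x ∈ Ioc (0 : ℝ) 1, ∀ y ∈ Ioc (0 : ℝ) 1, cellAvg N (fun x' => r x' y) x ∈ Icc 0 1 :=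
    fun _ hx _ hy => hu.cellAvg_column_mem_Icc hN0 hx hy
  have hr : Measurable (uncurry r) := measurable_uncurry_cellAvg hu.1
  have hs := measurable_uncurry_cellAvg_left (N := N) hr
  calc _ ≤ (∫ x in Ioc 0 1, ∫ y in Ioc 0 1, |u x y - r x y|)
        + ∫ y in Ioc 0 1, ∫ x in Ioc 0 1, |r x y - cellAvg N (fun x' => r x' y) x| :=
        integral_integral_le_add_integral_integral_swap
          (integrable_uncurry_abs_sub_of_mem_Icc measurableSet_Ioc measurableSet_Ioc
            hu.1 hs hu01 hs01)
          (integrable_uncurry_abs_sub_of_mem_Icc measurableSet_Ioc measurableSet_Ioc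
            hu.1 hr hu01 hr01)
          (integrable_uncurry_abs_sub_of_mem_Icc measurableSet_Ioc measurableSet_Ioc
            hr hs hr01 hs01)
          fun x y => abs_sub_le _ _ _
    _ ≤ 3 / N + 3 / N := add_le_add
        (setIntegral_Ioc_zero_one_le fun x hx => ⟨integral_nonneg fun _ => abs_nonneg _,
          hrob.setIntegral_abs_sub_cellAvg_row_le hu hN0 hx⟩)
        (setIntegral_Ioc_zero_one_le fun y hy => ⟨integral_nonneg fun _ => abs_nonneg _,
          hrob.setIntegral_abs_sub_cellAvg_column_le hu hN0 hy⟩)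
    _ ≤ 7 / N := by rw [← add_div]; gcongr; norm_num
end
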